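/- arXiv:1907.13023 — 5 statements merged into one kernel-verified Lean document; each statement's English description precedes it below -/
import Mathlib

section
/- For all x, y, u ∈ E and every τ > 0, −(1/τ)·⟨∇²f(x)u, u⟩ − τ^ν·H_{f,3}(ν)·‖y − x‖^{1+ν}·‖u‖² ≤ D³f(x)[y−x, u, u] ≤ (1/τ)·⟨∇²f(x)u, u⟩ + τ^ν·H_{f,3}(ν)·‖y − x‖^{1+ν}·‖u‖². -/
open Set

/-!
Restrict to the line `s ↦ x + s • h`: `g s = D²f(x + s h)[u, u]` is nonnegative by convexity and
has derivative `D³f(x + s h)[h, u, u]`, which by Hölder continuity stays within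
`Hf (τ ‖h‖)^ν ‖h‖ ‖u‖²` of `c = D³f(x)[h, u, u]` on `[0, τ]`. Hence
`0 ≤ g τ ≤ g 0 + τ c + τ^{1+ν} Hf ‖h‖^{1+ν} ‖u‖²`, which after division by `τ` is the lower bound;
replacing `h` by `-h` gives the upper bound.
-/

section LineRestriction

variable {E F : Type*} [NormedAddCommGroup E] [NormedSpace ℝ E] [NormedAddCommGroup F]
  [NormedSpace ℝ F] {f : E → F}

theorem hasDerivAt_iteratedFDeriv_add_smul_apply {n : ℕ} (hf : ContDiff ℝ (n + 1) f)
    (x h : E) (m : Fin n → E) (t : ℝ) :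
    HasDerivAt (fun s : ℝ => iteratedFDeriv ℝ n f (x + s • h) m)
      (iteratedFDeriv ℝ (n + 1) f (x + t • h) (Fin.cons h m)) t := by
  have hline : HasDerivAt (fun s : ℝ => x + s • h) h t := by
    simpa using ((hasDerivAt_id t).smul_const h).const_add x
  have hD := (hf.differentiable_iteratedFDeriv (mod_cast Nat.lt_succ_self n)
    (x + t • h)).hasFDerivAt
  exact ((ContinuousMultilinearMap.apply ℝ (fun _ : Fin n => E) F m).hasFDerivAt.comp _
    hD).comp_hasDerivAt t hline

end LineRestriction

section ConvexThirdDerivative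

variable {E : Type*} [NormedAddCommGroup E] [NormedSpace ℝ E] {f : E → ℝ}

theorem ConvexOn.iteratedFDeriv_two_apply_self_nonneg (hconv : ConvexOn ℝ univ f)
    (hf : ContDiff ℝ 2 f) (z u : E) : 0 ≤ iteratedFDeriv ℝ 2 f z ![u, u] := by
  set φ : ℝ → ℝ := fun s => f (z + s • u)
  set ψ : ℝ → ℝ := fun s => iteratedFDeriv ℝ 1 f (z + s • u) ![u]
  have hφ : ∀ s, HasDerivAt φ (ψ s) s := fun s => by
    simpa [φ, ψ] using
      hasDerivAt_iteratedFDeriv_add_smul_apply (n := 0) (hf.of_le one_le_two) z u ![] s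
  have hφconv : ConvexOn ℝ univ φ := by
    have := hconv.comp_affineMap (AffineMap.lineMap z (z + u))
    simpa [φ, Function.comp_def, AffineMap.lineMap_apply, add_comm] using this
  have hψ : Monotone ψ := by
    rw [← funext fun s => (hφ s).deriv, ← monotoneOn_univ]
    exact hφconv.monotoneOn_deriv fun s _ => (hφ s).differentiableAt
  simpa [ψ] using (hasDerivAt_iteratedFDeriv_add_smul_apply hf z u ![u] 0).nonneg_of_monotone hψ

theorem norm_iteratedFDeriv_three_add_smul_apply_sub_le {ν Hf : ℝ} (hν : 0 ≤ ν) (hHf : 0 ≤ Hf)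
    (hHolder : ∀ x y : E,
      ‖iteratedFDeriv ℝ 3 f x - iteratedFDeriv ℝ 3 f y‖ ≤ Hf * ‖x - y‖ ^ ν)
    (x h u : E) {t τ : ℝ} (ht : t ∈ Icc 0 τ) :
    ‖iteratedFDeriv ℝ 3 f (x + t • h) ![h, u, u] - iteratedFDeriv ℝ 3 f x ![h, u, u]‖
      ≤ τ ^ ν * Hf * ‖h‖ ^ (1 + ν) * ‖u‖ ^ 2 := by
  have hdist : ‖x + t • h - x‖ ^ ν ≤ τ ^ ν * ‖h‖ ^ ν := by
    rw [add_sub_cancel_left, norm_smul, Real.norm_of_nonneg ht.1,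
      Real.mul_rpow ht.1 (norm_nonneg h)]
    gcongr
    exacts [ht.1, ht.2]
  calc _ = ‖(iteratedFDeriv ℝ 3 f (x + t • h) - iteratedFDeriv ℝ 3 f x) ![h, u, u]‖ := rfl
    _ ≤ ‖iteratedFDeriv ℝ 3 f (x + t • h) - iteratedFDeriv ℝ 3 f x‖ * (‖h‖ * ‖u‖ ^ 2) := by
        simpa [Fin.prod_univ_three, sq, mul_assoc] using
          (iteratedFDeriv ℝ 3 f (x + t • h) - iteratedFDeriv ℝ 3 f x).le_opNorm ![h, u, u]
    _ ≤ Hf * (τ ^ ν * ‖h‖ ^ ν) * (‖h‖ * ‖u‖ ^ 2) := by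
        gcongr
        exact (hHolder _ _).trans (by gcongr)
    _ = _ := by
        rw [Real.rpow_add' (norm_nonneg h) (by linarith), Real.rpow_one]
        ring

theorem neg_iteratedFDeriv_three_apply_le {ν Hf τ : ℝ} (hν : 0 ≤ ν) (hHf : 0 ≤ Hf)
    (hf : ContDiff ℝ 3 f) (hconv : ConvexOn ℝ univ f)
    (hHolder : ∀ x y : E,
      ‖iteratedFDeriv ℝ 3 f x - iteratedFDeriv ℝ 3 f y‖ ≤ Hf * ‖x - y‖ ^ ν)
    (x h u : E) (hτ : 0 < τ) :
    -iteratedFDeriv ℝ 3 f x ![h, u, u]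
      ≤ 1 / τ * iteratedFDeriv ℝ 2 f x ![u, u] + τ ^ ν * Hf * ‖h‖ ^ (1 + ν) * ‖u‖ ^ 2 := by
  set c := iteratedFDeriv ℝ 3 f x ![h, u, u]
  set B := τ ^ ν * Hf * ‖h‖ ^ (1 + ν) * ‖u‖ ^ 2
  set g : ℝ → ℝ := fun s => iteratedFDeriv ℝ 2 f (x + s • h) ![u, u]
  have hg : ∀ s, HasDerivAt g (iteratedFDeriv ℝ 3 f (x + s • h) ![h, u, u]) s :=
    hasDerivAt_iteratedFDeriv_add_smul_apply hf x h ![u, u]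
  have hgrowth : g τ - g 0 ≤ (c + B) * (τ - 0) := by
    refine (convex_Icc 0 τ).image_sub_le_mul_sub_of_deriv_le
      (fun s _ => (hg s).continuousAt.continuousWithinAt)
      (fun s _ => (hg s).differentiableAt.differentiableWithinAt) (fun s hs => ?_)
      0 (left_mem_Icc.2 hτ.le) τ (right_mem_Icc.2 hτ.le) hτ.le
    rw [interior_Icc] at hs
    rw [(hg s).deriv, ← sub_le_iff_le_add']
    exact (Real.le_norm_self _).trans
      (norm_iteratedFDeriv_three_add_smul_apply_sub_le hν hHf hHolder x h u
        (Ioo_subset_Icc_self hs))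
  have hgτ : 0 ≤ g τ := hconv.iteratedFDeriv_two_apply_self_nonneg (hf.of_le (by norm_num)) _ u
  have hg0 : g 0 = iteratedFDeriv ℝ 2 f x ![u, u] := by simp [g]
  rw [← hg0]
  have : τ * -c ≤ τ * (1 / τ * g 0 + B) := by
    rw [mul_add, ← mul_assoc, mul_one_div_cancel hτ.ne', one_mul]
    linarith
  exact le_of_mul_le_mul_left this hτ

end ConvexThirdDerivative

theorem statement_1_general
    {E : Type*} [NormedAddCommGroup E] [InnerProductSpace ℝ E]
    (ν Hf : ℝ) (hν : ν ∈ Set.Icc (0 : ℝ) 1) (hHf : 0 < Hf)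
    (f : E → ℝ) (hf : ContDiff ℝ 3 f) (hconv : ConvexOn ℝ Set.univ f)
    (hHolder : ∀ x y : E,
      ‖iteratedFDeriv ℝ 3 f x - iteratedFDeriv ℝ 3 f y‖ ≤ Hf * ‖x - y‖ ^ ν)
    (x y u : E) (τ : ℝ) (hτ : 0 < τ) :
    -(1 / τ) * iteratedFDeriv ℝ 2 f x ![u, u]
        - τ ^ ν * Hf * ‖y - x‖ ^ (1 + ν) * ‖u‖ ^ 2
      ≤ iteratedFDeriv ℝ 3 f x ![y - x, u, u] ∧
    iteratedFDeriv ℝ 3 f x ![y - x, u, u]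
      ≤ (1 / τ) * iteratedFDeriv ℝ 2 f x ![u, u]
        + τ ^ ν * Hf * ‖y - x‖ ^ (1 + ν) * ‖u‖ ^ 2 := by
  have hbound := fun h => neg_iteratedFDeriv_three_apply_le hν.1 hHf.le hf hconv hHolder x h u hτ
  have hneg : iteratedFDeriv ℝ 3 f x ![-(y - x), u, u]
      = -iteratedFDeriv ℝ 3 f x ![y - x, u, u] := by
    simpa using (iteratedFDeriv ℝ 3 f x).cons_smul ![u, u] (-1) (y - x)
  constructor
  · linarith [hbound (y - x)]
  · have hupper := hbound (-(y - x))
    rw [hneg, norm_neg, neg_neg] at hupper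
    linarith

/-- Lemma 3.2. Bounds on the third derivative of a convex function with
`ν`-Hölder continuous third derivatives:
`−(1/τ)⟨∇²f(x)u,u⟩ − τ^ν H ‖y−x‖^{1+ν}‖u‖² ≤ D³f(x)[y−x,u,u] ≤ (1/τ)⟨∇²f(x)u,u⟩ + τ^ν H ‖y−x‖^{1+ν}‖u‖²`. -/
theorem statement_1
    {E : Type*} [NormedAddCommGroup E] [InnerProductSpace ℝ E] [FiniteDimensional ℝ E]
    (ν Hf : ℝ) (hν : ν ∈ Set.Icc (0 : ℝ) 1) (hHf : 0 < Hf)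
    (f : E → ℝ) (hf : ContDiff ℝ 3 f) (hconv : ConvexOn ℝ Set.univ f)
    (hHolder : ∀ x y : E,
      ‖iteratedFDeriv ℝ 3 f x - iteratedFDeriv ℝ 3 f y‖ ≤ Hf * ‖x - y‖ ^ ν)
    (x y u : E) (τ : ℝ) (hτ : 0 < τ) :
    -(1 / τ) * iteratedFDeriv ℝ 2 f x ![u, u]
        - τ ^ ν * Hf * ‖y - x‖ ^ (1 + ν) * ‖u‖ ^ 2
      ≤ iteratedFDeriv ℝ 3 f x ![y - x, u, u] ∧
    iteratedFDeriv ℝ 3 f x ![y - x, u, u]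
      ≤ (1 / τ) * iteratedFDeriv ℝ 2 f x ![u, u]
        + τ ^ ν * Hf * ‖y - x‖ ^ (1 + ν) * ‖u‖ ^ 2 :=
  statement_1_general ν Hf hν hHf f hf hconv hHolder x y u τ hτ
end

section
/- Let H ≥ H_{f,3}(ν). Suppose f has a global minimizer x*, that x ∈ F(x₀) := {z ∈ E : f(z) ≤ f(x₀)}, and that sup_{y∈F(x₀)} ‖y − x*‖ ≤ R₀ < +∞ with R₀ ≥ 1. Let L_H(x) = {z ∈ E : Ω_{x,3,H}^{(ν)}(z) ≤ f(x)}. Then every y in the convex hull of L_H(x) satisfies ‖y − x‖ ≤ 2R₀ and ‖∇²ρ_x(y)‖ ≤ ‖∇²f(x)‖ + 12R₀², where ‖·‖ applied to operators denotes the operator norm. -/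
/-!
Along the segment from `x` to `z`, Taylor's formula with Lagrange remainder and the Hölder bound on
`D³f` give `|f z - Φ_{x,3}(z)| ≤ (H_{f,3}(ν)/6) ‖z - x‖^{3+ν}`, so `f ≤ Ω_{x,3,H}^{(ν)}` when
`H ≥ H_{f,3}(ν)`. Hence `L_H(x)` lies in the sublevel set `F(x₀)`, which sits in the ball of radius
`R₀` about `x*`; as `x` is in that ball too, the convex hull of `L_H(x)` lies in the ball of radius
`2R₀` about `x`. For the second claim, `∇²ρ_x(y)` is the symmetrised `∇²f(x)` plus the Hessian of
`‖·‖^{3+ν}/(3+ν)` at `y - x`, whose norm is at most `(2+ν)‖y - x‖^{1+ν} ≤ 3 (2R₀)² = 12R₀²`.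
-/

open scoped InnerProductSpace
open Set

section Taylor

variable {E : Type*} [NormedAddCommGroup E] [NormedSpace ℝ E] {f : E → ℝ}

theorem iteratedDeriv_comp_add_smul {n : WithTop ℕ∞} (hf : ContDiff ℝ n f) (x u : E) {i : ℕ}
    (hi : i ≤ n) (t : ℝ) :
    iteratedDeriv i (fun t : ℝ => f (x + t • u)) t =
      iteratedFDeriv ℝ i f (x + t • u) fun _ => u := by
  have hfx : ContDiff ℝ n fun z => f (x + z) := hf.comp (contDiff_const.add contDiff_id)
  rw [iteratedDeriv_eq_iteratedFDeriv]
  change iteratedFDeriv ℝ i ((fun z => f (x + z)) ∘ ContinuousLinearMap.toSpanSingleton ℝ u) t _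
    = _
  rw [ContinuousLinearMap.iteratedFDeriv_comp_right _ hfx t hi]
  simp [iteratedFDeriv_comp_add_left]

theorem exists_eq_taylor_three_lagrange (hf : ContDiff ℝ 3 f) (x u : E) :
    ∃ ξ ∈ Ioo (0 : ℝ) 1, f (x + u) = f x + fderiv ℝ f x u
      + 1 / 2 * iteratedFDeriv ℝ 2 f x (fun _ => u)
      + 1 / 6 * iteratedFDeriv ℝ 3 f (x + ξ • u) (fun _ => u) := by
  have hφ : ContDiff ℝ 3 fun t : ℝ => f (x + t • u) :=
    hf.comp (contDiff_const.add (contDiff_id.smul contDiff_const))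
  obtain ⟨ξ, hξ, h⟩ := taylor_mean_remainder_lagrange_iteratedDeriv (n := 2) zero_ne_one
    hφ.contDiffOn
  refine ⟨ξ, by simpa using hξ, ?_⟩
  have hwithin : ∀ k ≤ 2, iteratedDerivWithin k (fun t : ℝ => f (x + t • u)) (uIcc 0 1) 0
      = iteratedFDeriv ℝ k f x fun _ => u := fun k hk => by
    rw [iteratedDerivWithin_eq_iteratedDeriv (uniqueDiffOn_uIcc zero_ne_one)
      (hφ.contDiffAt.of_le (by norm_cast; omega)) left_mem_uIcc,
      iteratedDeriv_comp_add_smul hf x u (by norm_cast; omega)]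
    simp
  simp only [taylor_within_apply, Finset.sum_range_succ, Finset.sum_range_zero,
    hwithin 0 (by norm_num), hwithin 1 (by norm_num), hwithin 2 le_rfl,
    iteratedDeriv_comp_add_smul hf x u le_rfl, iteratedFDeriv_zero_apply, iteratedFDeriv_one_apply,
    one_smul, smul_eq_mul, sub_zero, one_pow, Nat.factorial] at h
  linarith

theorem abs_sub_taylor_three_le_of_holder {ν Hf : ℝ} (hν : 0 ≤ ν) (hHf : 0 ≤ Hf)
    (hf : ContDiff ℝ 3 f)
    (hHolder : ∀ a b : E, ‖iteratedFDeriv ℝ 3 f a - iteratedFDeriv ℝ 3 f b‖ ≤ Hf * ‖a - b‖ ^ ν)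
    (x u : E) :
    |f (x + u) - (f x + fderiv ℝ f x u + 1 / 2 * iteratedFDeriv ℝ 2 f x (fun _ => u)
      + 1 / 6 * iteratedFDeriv ℝ 3 f x (fun _ => u))| ≤ Hf / 6 * ‖u‖ ^ (3 + ν) := by
  obtain ⟨ξ, ⟨hξ0, hξ1⟩, h⟩ := exists_eq_taylor_three_lagrange hf x u
  have hdiff : ‖iteratedFDeriv ℝ 3 f (x + ξ • u) - iteratedFDeriv ℝ 3 f x‖ ≤ Hf * ‖u‖ ^ ν :=
    calc _ ≤ Hf * ‖ξ • u‖ ^ ν := by simpa using hHolder (x + ξ • u) x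
      _ = Hf * (ξ ^ ν * ‖u‖ ^ ν) := by
        rw [norm_smul, Real.norm_of_nonneg hξ0.le, Real.mul_rpow hξ0.le (norm_nonneg u)]
      _ ≤ Hf * (1 * ‖u‖ ^ ν) := by
        gcongr
        exact Real.rpow_le_one hξ0.le hξ1.le hν
      _ = Hf * ‖u‖ ^ ν := by rw [one_mul]
  calc _ = 1 / 6 * |(iteratedFDeriv ℝ 3 f (x + ξ • u) - iteratedFDeriv ℝ 3 f x) fun _ => u| := by
        rw [h, sub_apply, add_sub_add_left_eq_sub, ← mul_sub, abs_mul,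
          abs_of_pos (by norm_num : (0 : ℝ) < 1 / 6)]
    _ ≤ 1 / 6 * (Hf * ‖u‖ ^ ν * ‖u‖ ^ 3) := by
        gcongr
        refine ((iteratedFDeriv ℝ 3 f (x + ξ • u) - iteratedFDeriv ℝ 3 f x).le_of_opNorm_le
          hdiff _).trans_eq ?_
        simp
    _ = Hf / 6 * ‖u‖ ^ (3 + ν) := by
        rw [add_comm, Real.rpow_add' (norm_nonneg u) (by positivity), Real.rpow_ofNat]
        ring

end Taylor

theorem le_taylor_three_add_rpow_of_holder {E : Type*} [NormedAddCommGroup E]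
    [InnerProductSpace ℝ E] [CompleteSpace E] {f : E → ℝ} {ν Hf H : ℝ} (hν : 0 ≤ ν)
    (hHf : 0 ≤ Hf) (hH : Hf ≤ H) (hf : ContDiff ℝ 3 f)
    (hHolder : ∀ a b : E, ‖iteratedFDeriv ℝ 3 f a - iteratedFDeriv ℝ 3 f b‖ ≤ Hf * ‖a - b‖ ^ ν)
    (x z : E) :
    f z ≤ f x + ⟪gradient f x, z - x⟫_ℝ
      + 1 / 2 * iteratedFDeriv ℝ 2 f x ![z - x, z - x]
      + 1 / 6 * iteratedFDeriv ℝ 3 f x ![z - x, z - x, z - x]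
      + H / 6 * ‖z - x‖ ^ (3 + ν) := by
  have htaylor := le_of_abs_le (abs_sub_taylor_three_le_of_holder hν hHf hf hHolder x (z - x))
  have hHf_le : Hf / 6 * ‖z - x‖ ^ (3 + ν) ≤ H / 6 * ‖z - x‖ ^ (3 + ν) := by gcongr
  simp only [add_sub_cancel] at htaylor
  simp only [gradient, InnerProductSpace.toDual_symm_apply, Matrix.vec_single_eq_const,
    Matrix.vecCons_const]
  linarith

theorem convexHull_subset_closedBall_two_mul {E : Type*} [SeminormedAddCommGroup E]
    [NormedSpace ℝ E] {s : Set E} {c x : E} {r : ℝ} (hs : s ⊆ Metric.closedBall c r)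
    (hx : x ∈ Metric.closedBall c r) :
    convexHull ℝ s ⊆ Metric.closedBall x (2 * r) := by
  refine convexHull_min (fun z hz => ?_) (convex_closedBall x (2 * r))
  rw [Metric.mem_closedBall, two_mul]
  exact (dist_triangle_right z x c).trans (add_le_add (hs hz) hx)

theorem ContinuousLinearMap.hasFDerivAt_apply_self {𝕜 E F : Type*} [NontriviallyNormedField 𝕜]
    [NormedAddCommGroup E] [NormedSpace 𝕜 E] [NormedAddCommGroup F] [NormedSpace 𝕜 F]
    (b : E →L[𝕜] E →L[𝕜] F) (w : E) :
    HasFDerivAt (fun v => b v v) (b w + b.flip w) w := by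
  simpa using b.hasFDerivAt.clm_apply (hasFDerivAt_id w)

section NormRpow

variable {F : Type*} [NormedAddCommGroup F] [InnerProductSpace ℝ F]

theorem hasFDerivAt_norm_rpow_of_ne_zero {w : F} (hw : w ≠ 0) (q : ℝ) :
    HasFDerivAt (fun v : F => ‖v‖ ^ q) ((q * ‖w‖ ^ (q - 2)) • innerSL ℝ w) w := by
  convert! ((hasStrictFDerivAt_norm_sq w).rpow_const (p := q / 2) (by simp [hw])).hasFDerivAt
    using 0
  simp_rw [← Real.rpow_natCast_mul (norm_nonneg _), ← Nat.cast_smul_eq_nsmul ℝ, smul_smul]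
  ring_nf

open Asymptotics Topology in
theorem hasFDerivAt_zero_norm_rpow_smul_innerSL {q : ℝ} (hq : 0 < q) :
    HasFDerivAt (fun v : F => ‖v‖ ^ q • innerSL ℝ v) (0 : F →L[ℝ] F →L[ℝ] ℝ) 0 := by
  refine .of_isLittleO ?_
  have hsmall : (fun v : F => ‖v‖ ^ q) =o[𝓝 0] (fun _ => (1 : ℝ)) :=
    (isLittleO_one_iff ℝ).2 (by
      simpa [hq.ne'] using (continuous_norm.rpow_const fun _ => Or.inr hq.le).tendsto (0 : F))
  calc (fun v : F => ‖v‖ ^ q • innerSL ℝ v - ‖(0 : F)‖ ^ q • innerSL ℝ 0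
        - (0 : F →L[ℝ] F →L[ℝ] ℝ) (v - 0))
      =O[𝓝 0] fun v => ‖v‖ ^ q * ‖v‖ :=
        isBigO_of_le _ fun v => by simp [norm_smul, innerSL_apply_norm]
    _ =o[𝓝 0] fun v => (1 : ℝ) * ‖v‖ := hsmall.mul_isBigO (isBigO_refl _ _)
    _ =O[𝓝 0] fun v => v - 0 := by
      simpa only [one_mul, sub_zero] using isBigO_norm_left.2 (isBigO_refl (fun v : F => v) (𝓝 0))

theorem exists_hasFDerivAt_norm_rpow_smul_innerSL {q : ℝ} (hq : 0 < q) (w : F) :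
    ∃ D : F →L[ℝ] F →L[ℝ] ℝ, HasFDerivAt (fun v : F => ‖v‖ ^ q • innerSL ℝ v) D w ∧
      ‖D‖ ≤ (1 + q) * ‖w‖ ^ q := by
  rcases eq_or_ne w 0 with rfl | hw
  · refine ⟨0, hasFDerivAt_zero_norm_rpow_smul_innerSL hq, ?_⟩
    rw [norm_zero (E := F →L[ℝ] F →L[ℝ] ℝ)]
    positivity
  refine ⟨_, (hasFDerivAt_norm_rpow_of_ne_zero hw q).smul (innerSL ℝ).hasFDerivAt, ?_⟩
  have hpow : ‖w‖ ^ (q - 2) * (‖w‖ * ‖w‖) = ‖w‖ ^ q := by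
    rw [← sq, ← Real.rpow_natCast, ← Real.rpow_add (norm_pos_iff.2 hw)]
    norm_num
  refine ContinuousLinearMap.opNorm_le_bound₂ _ (by positivity) fun h k => ?_
  change |‖w‖ ^ q * ⟪h, k⟫_ℝ + q * ‖w‖ ^ (q - 2) * ⟪w, h⟫_ℝ * ⟪w, k⟫_ℝ| ≤ _
  have hA : |‖w‖ ^ q * ⟪h, k⟫_ℝ| ≤ ‖w‖ ^ q * (‖h‖ * ‖k‖) := by
    rw [abs_mul, abs_of_nonneg (by positivity)]
    gcongr
    exact abs_real_inner_le_norm h k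
  have hB : |q * ‖w‖ ^ (q - 2) * ⟪w, h⟫_ℝ * ⟪w, k⟫_ℝ| ≤ q * ‖w‖ ^ q * (‖h‖ * ‖k‖) := by
    rw [abs_mul, abs_mul, abs_of_nonneg (by positivity), ← hpow]
    calc _ ≤ q * ‖w‖ ^ (q - 2) * (‖w‖ * ‖h‖) * (‖w‖ * ‖k‖) := by
          gcongr <;> exact abs_real_inner_le_norm _ _
      _ = _ := by ring
  calc _ ≤ _ := abs_add_le _ _
    _ ≤ _ := add_le_add hA hB
    _ = _ := by ring

theorem norm_iteratedFDeriv_two_half_apply_self_add_norm_rpow_le (b : F →L[ℝ] F →L[ℝ] ℝ)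
    {p : ℝ} (hp : 2 < p) (w : F) :
    ‖iteratedFDeriv ℝ 2 (fun v => 1 / 2 * b v v + 1 / p * ‖v‖ ^ p) w‖
      ≤ ‖b‖ + (p - 1) * ‖w‖ ^ (p - 2) := by
  have hgrad : ∀ v, HasFDerivAt (fun v => 1 / 2 * b v v + 1 / p * ‖v‖ ^ p)
      ((1 / 2 : ℝ) • (b + b.flip) v + ‖v‖ ^ (p - 2) • innerSL ℝ v) v := fun v => by
    refine (((b.hasFDerivAt_apply_self v).const_mul (1 / 2)).add
      ((hasFDerivAt_norm_rpow v (by linarith)).const_mul (1 / p))).congr_fderiv ?_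
    ext u
    simp only [smul_add, add_apply, smul_apply, smul_eq_mul, ContinuousLinearMap.flip_apply,
      coe_innerSL_apply, add_right_inj]
    field_simp
  obtain ⟨D, hD, hDle⟩ := exists_hasFDerivAt_norm_rpow_smul_innerSL (q := p - 2) (by linarith) w
  have hHess : HasFDerivAt (fun v => (1 / 2 : ℝ) • (b + b.flip) v + ‖v‖ ^ (p - 2) • innerSL ℝ v)
      ((1 / 2 : ℝ) • (b + b.flip) + D) w :=
    (((1 / 2 : ℝ) • (b + b.flip)).hasFDerivAt).add hD
  rw [← norm_iteratedFDeriv_fderiv (n := 1), norm_iteratedFDeriv_one,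
    funext fun v => (hgrad v).fderiv, hHess.fderiv]
  calc _ ≤ ‖(1 / 2 : ℝ) • (b + b.flip)‖ + ‖D‖ := norm_add_le _ _
    _ ≤ 1 / 2 * (‖b‖ + ‖b.flip‖) + (1 + (p - 2)) * ‖w‖ ^ (p - 2) := by
      gcongr
      refine (ContinuousLinearMap.opNorm_smul_le _ _).trans ?_
      rw [Real.norm_of_nonneg (by norm_num)]
      gcongr
      exact norm_add_le _ _
    _ = _ := by rw [ContinuousLinearMap.opNorm_flip]; ring

theorem norm_iteratedFDeriv_two_half_hessian_add_norm_rpow_le (f : F → ℝ) (x : F) {p : ℝ}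
    (hp : 2 < p) (y : F) :
    ‖iteratedFDeriv ℝ 2
        (fun y => 1 / 2 * iteratedFDeriv ℝ 2 f x ![y - x, y - x] + 1 / p * ‖y - x‖ ^ p) y‖
      ≤ ‖iteratedFDeriv ℝ 2 f x‖ + (p - 1) * ‖y - x‖ ^ (p - 2) := by
  set b := fderiv ℝ (fderiv ℝ f) x
  set ρ₀ : F → ℝ := fun w => 1 / 2 * b w w + 1 / p * ‖w‖ ^ p
  have hshift : (fun y => 1 / 2 * iteratedFDeriv ℝ 2 f x ![y - x, y - x] + 1 / p * ‖y - x‖ ^ p)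
      = fun y => ρ₀ (y - x) := by
    simp only [iteratedFDeriv_two_apply]
    rfl
  have hb : ‖iteratedFDeriv ℝ 2 f x‖ = ‖b‖ := by
    rw [← norm_iteratedFDeriv_fderiv (n := 1), norm_iteratedFDeriv_one]
  rw [hshift, iteratedFDeriv_comp_sub, hb]
  exact norm_iteratedFDeriv_two_half_apply_self_add_norm_rpow_le b hp (y - x)

end NormRpow

theorem statement_4_general
    {E : Type*} [NormedAddCommGroup E] [InnerProductSpace ℝ E] [FiniteDimensional ℝ E]
    (ν Hf : ℝ) (hν : ν ∈ Set.Icc (0 : ℝ) 1) (hHf : 0 < Hf)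
    (f : E → ℝ) (hf : ContDiff ℝ 3 f)
    (hHolder : ∀ x y : E,
      ‖iteratedFDeriv ℝ 3 f x - iteratedFDeriv ℝ 3 f y‖ ≤ Hf * ‖x - y‖ ^ ν)
    (H : ℝ) (hH : Hf ≤ H)
    (x x0 xstar : E) (R0 : ℝ) (hR0 : 1 ≤ R0)
    (hxF : f x ≤ f x0)
    (hball : ∀ z : E, f z ≤ f x0 → ‖z - xstar‖ ≤ R0)
    (Ω ρ : E → ℝ)
    (hΩ : Ω = fun y => f x + ⟪gradient f x, y - x⟫_ℝ
        + (1 / 2) * iteratedFDeriv ℝ 2 f x ![y - x, y - x]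
        + (1 / 6) * iteratedFDeriv ℝ 3 f x ![y - x, y - x, y - x]
        + (H / 6) * ‖y - x‖ ^ ((3 : ℝ) + ν))
    (hρ : ρ = fun y => (1 / 2) * iteratedFDeriv ℝ 2 f x ![y - x, y - x]
        + (1 / (3 + ν)) * ‖y - x‖ ^ ((3 : ℝ) + ν)) :
    ∀ y ∈ convexHull ℝ {z : E | Ω z ≤ f x},
      ‖y - x‖ ≤ 2 * R0 ∧
      ‖iteratedFDeriv ℝ 2 ρ y‖ ≤ ‖iteratedFDeriv ℝ 2 f x‖ + 12 * R0 ^ 2 := by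
  obtain ⟨hν0, hν1⟩ := hν
  have hL : {z | Ω z ≤ f x} ⊆ Metric.closedBall xstar R0 := fun z hz => by
    have hfz := le_taylor_three_add_rpow_of_holder hν0 hHf.le hH hf hHolder x z
    rw [Metric.mem_closedBall, dist_eq_norm]
    exact hball z ((hfz.trans (by simpa [hΩ] using hz)).trans hxF)
  intro y hy
  have hyx : ‖y - x‖ ≤ 2 * R0 := by
    simpa [dist_eq_norm] using convexHull_subset_closedBall_two_mul hL
      (by simpa [dist_eq_norm] using hball x hxF) hy
  refine ⟨hyx, ?_⟩
  have hpow : ‖y - x‖ ^ (1 + ν) ≤ 4 * R0 ^ 2 :=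
    calc ‖y - x‖ ^ (1 + ν) ≤ (2 * R0) ^ (1 + ν) := by gcongr
      _ ≤ (2 * R0) ^ (2 : ℝ) := Real.rpow_le_rpow_of_exponent_le (by linarith) (by linarith)
      _ = 4 * R0 ^ 2 := by rw [Real.rpow_two]; ring
  have hρy := norm_iteratedFDeriv_two_half_hessian_add_norm_rpow_le f x
    (p := 3 + ν) (by linarith) y
  rw [← hρ, show (3 : ℝ) + ν - 1 = 2 + ν by ring, show (3 : ℝ) + ν - 2 = 1 + ν by ring] at hρy
  have : (2 + ν) * ‖y - x‖ ^ (1 + ν) ≤ 3 * (4 * R0 ^ 2) := by gcongr; linarith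
  linarith

/-- Lemma 3.5. If `H ≥ H_{f,3}(ν)`, `f` has a global minimizer `x*`,
`x` lies in the sublevel set `F(x₀)` and `F(x₀)` is contained in the ball of radius `R₀ ≥ 1`
around `x*`, then every `y` in the convex hull of `L_H(x) = {z : Ω_{x,3,H}^{(ν)}(z) ≤ f(x)}`
satisfies `‖y − x‖ ≤ 2R₀` and `‖∇²ρ_x(y)‖ ≤ ‖∇²f(x)‖ + 12R₀²`. -/
theorem statement_4
    {E : Type*} [NormedAddCommGroup E] [InnerProductSpace ℝ E] [FiniteDimensional ℝ E]
    (ν Hf : ℝ) (hν : ν ∈ Set.Icc (0 : ℝ) 1) (hHf : 0 < Hf)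
    (f : E → ℝ) (hf : ContDiff ℝ 3 f) (hconv : ConvexOn ℝ Set.univ f)
    (hHolder : ∀ x y : E,
      ‖iteratedFDeriv ℝ 3 f x - iteratedFDeriv ℝ 3 f y‖ ≤ Hf * ‖x - y‖ ^ ν)
    (H : ℝ) (hH : Hf ≤ H)
    (x x0 xstar : E) (R0 : ℝ) (hR0 : 1 ≤ R0)
    (hmin : ∀ z : E, f xstar ≤ f z)
    (hxF : f x ≤ f x0)
    (hball : ∀ z : E, f z ≤ f x0 → ‖z - xstar‖ ≤ R0)
    (Ω ρ : E → ℝ)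
    (hΩ : Ω = fun y => f x + ⟪gradient f x, y - x⟫_ℝ
        + (1 / 2) * iteratedFDeriv ℝ 2 f x ![y - x, y - x]
        + (1 / 6) * iteratedFDeriv ℝ 3 f x ![y - x, y - x, y - x]
        + (H / 6) * ‖y - x‖ ^ ((3 : ℝ) + ν))
    (hρ : ρ = fun y => (1 / 2) * iteratedFDeriv ℝ 2 f x ![y - x, y - x]
        + (1 / (3 + ν)) * ‖y - x‖ ^ ((3 : ℝ) + ν)) :
    ∀ y ∈ convexHull ℝ {z : E | Ω z ≤ f x},
      ‖y - x‖ ≤ 2 * R0 ∧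
      ‖iteratedFDeriv ℝ 2 ρ y‖ ≤ ‖iteratedFDeriv ℝ 2 f x‖ + 12 * R0 ^ 2 :=
  statement_4_general ν Hf hν hHf f hf hHolder H hH x x0 xstar R0 hR0 hxF hball Ω ρ hΩ hρ
end

section
/- Suppose (H1)–(H3) hold, g has a global minimizer y*, and let {y_k} be generated by Algorithm A. Then for all k ≥ 0, g(y_k) − g(y_{k+1}) ≥ [σ_q/(q·(max{2L₀, 4L})^{q−1}·N^q)]·‖∇g(y_k)‖^q, and for every integer T ≥ 1, min_{0≤k≤T−1} ‖∇g(y_k)‖ ≤ N·[q·(max{2L₀, 4L})^{q−1}·(g(y₀) − g(y*))/σ_q]^{1/q}·(1/T)^{1/q}. -/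
open scoped InnerProductSpace

/-- The Bregman distance `β_d(u, v) = d(v) − d(u) − ⟨∇d(u), v − u⟩`. -/
noncomputable def breg {E : Type*} [NormedAddCommGroup E] [InnerProductSpace ℝ E]
    [CompleteSpace E] (d : E → ℝ) (u v : E) : ℝ :=
  d v - d u - ⟪gradient d u, v - u⟫_ℝ

/-- One successful step of the adaptive Bregman proximal gradient method with coefficient `M`:
`w` is a global minimizer of `z ↦ ⟨∇g(yk), z − yk⟩ + M·β_d(yk, z)` and satisfies the
sufficient-decrease acceptance test. -/
noncomputable def stepOK {E : Type*} [NormedAddCommGroup E] [InnerProductSpace ℝ E]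
    [CompleteSpace E] (g d : E → ℝ) (M : ℝ) (yk w : E) : Prop :=
  (∀ z : E, ⟪gradient g yk, w - yk⟫_ℝ + M * breg d yk w
      ≤ ⟪gradient g yk, z - yk⟫_ℝ + M * breg d yk z) ∧
  g w ≤ g yk + ⟪gradient g yk, w - yk⟫_ℝ + M * breg d yk w

/-- Algorithm A (adaptive Bregman proximal gradient method): `L 0 = L₀` and, for each `k`,
`i k` is the smallest integer `≥ 0` such that the regularized step with coefficient
`2^{i k}·L k` exists and is accepted, `y (k+1)` is that step, and `L (k+1) = 2^{i k − 1}·L k`. -/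
noncomputable def algA {E : Type*} [NormedAddCommGroup E] [InnerProductSpace ℝ E]
    [CompleteSpace E] (g d : E → ℝ) (L0 : ℝ) (y : ℕ → E) (L : ℕ → ℝ) (i : ℕ → ℕ) : Prop :=
  L 0 = L0 ∧ ∀ k : ℕ,
    stepOK g d ((2 : ℝ) ^ i k * L k) (y k) (y (k + 1)) ∧
    (∀ j : ℕ, j < i k → ¬ ∃ w : E, stepOK g d ((2 : ℝ) ^ j * L k) (y k) w) ∧
    L (k + 1) = (2 : ℝ) ^ i k * L k / 2

/-! The optimality condition of a step gives `∇g(y_k) = M_k (∇d(y_k) − ∇d(y_{k+1}))` with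
`M_k = 2^{i_k} L_k`, and the three-point identity turns the acceptance test into
`g(y_k) − g(y_{k+1}) ≥ M_k β_d(y_{k+1}, y_k) ≥ M_k (σ_q/q) ‖y_k − y_{k+1}‖^q`. The iterates stay in
the sublevel set of `y₀`, where (H3) makes `∇d` `N`-Lipschitz, so
`‖∇g(y_k)‖ ≤ M_k N ‖y_k − y_{k+1}‖`; eliminating `‖y_k − y_{k+1}‖` gives the decrease with
`M_k^{q-1}` in place of `max{2L₀, 4L}^{q-1}`. By (H1) and coercivity every coefficient `M ≥ L`
yields an accepted step, so backtracking stops before the coefficient exceeds `2L`, whence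
`M_k ≤ max{L₀, 2L}`. Summing the decreases telescopes to at most `g(y₀) − g(y*)`. -/

open Filter

lemma tendsto_mul_rpow_sub_mul_atTop {c q : ℝ} (hc : 0 < c) (hq : 1 < q) (b : ℝ) :
    Tendsto (fun t : ℝ => c * t ^ q - b * t) atTop atTop := by
  have hfactor : Tendsto (fun t : ℝ => t * (c * t ^ (q - 1) + -b)) atTop atTop :=
    tendsto_id.atTop_mul_atTop₀ <| tendsto_atTop_add_const_right _ _ <|
      (tendsto_rpow_atTop (by linarith)).const_mul_atTop hc
  refine hfactor.congr' <| (eventually_gt_atTop 0).mono fun t ht => ?_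
  rw [Real.rpow_sub_one ht.ne']
  field_simp
  ring

lemma div_mul_rpow_le_of_le_mul {σ q M Mx N G Δ δ : ℝ} (hσ : 0 ≤ σ) (hq : 1 ≤ q)
    (hM : 0 < M) (hMMx : M ≤ Mx) (hG : 0 ≤ G) (hΔ : 0 ≤ Δ) (hGΔ : G ≤ M * N * Δ)
    (hδ : M * (σ / q * Δ ^ q) ≤ δ) :
    σ / (q * Mx ^ (q - 1) * N ^ q) * G ^ q ≤ δ := by
  rcases hG.eq_or_lt with rfl | hG
  · rw [Real.zero_rpow (by linarith), mul_zero]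
    exact (by positivity : (0 : ℝ) ≤ M * (σ / q * Δ ^ q)).trans hδ
  have hN : 0 < N := by
    by_contra! hN
    exact (hG.trans_le hGΔ).not_ge
      (mul_nonpos_of_nonpos_of_nonneg (mul_nonpos_of_nonneg_of_nonpos hM.le hN) hΔ)
  calc σ / (q * Mx ^ (q - 1) * N ^ q) * G ^ q
      ≤ σ / (q * M ^ (q - 1) * N ^ q) * G ^ q := by gcongr
    _ = M * (σ / q * (G / (M * N)) ^ q) := by
      rw [Real.rpow_sub_one hM.ne', Real.div_rpow hG.le (by positivity),
        Real.mul_rpow hM.le hN.le]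
      field_simp
    _ ≤ M * (σ / q * Δ ^ q) := by
      gcongr
      rwa [div_le_iff₀ (by positivity), mul_comm]
    _ ≤ δ := hδ

open Finset in
lemma exists_lt_le_div_of_le_sub_succ {u f : ℕ → ℝ} {fmin : ℝ}
    (hu : ∀ k, u k ≤ f k - f (k + 1)) (hf : ∀ k, fmin ≤ f k) {T : ℕ} (hT : 0 < T) :
    ∃ k < T, u k ≤ (f 0 - fmin) / T := by
  obtain ⟨k, hk, hle⟩ := exists_le_of_sum_le (nonempty_range_iff.mpr hT.ne')
    (g := fun _ => (f 0 - fmin) / T) <| calc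
      ∑ k ∈ range T, u k ≤ ∑ k ∈ range T, (f k - f (k + 1)) := sum_le_sum fun k _ => hu k
      _ = f 0 - f T := sum_range_sub' _ _
      _ ≤ f 0 - fmin := by linarith [hf T]
      _ = ∑ _ ∈ range T, (f 0 - fmin) / T := by
        rw [sum_const, card_range, nsmul_eq_mul]
        field_simp
  exact ⟨k, mem_range.mp hk, hle⟩

lemma le_of_div_mul_rpow_le_div {σ K N D T G q : ℝ} (hσ : 0 < σ) (hK : 0 < K) (hN : 0 < N)
    (hq : 0 < q) (hD : 0 ≤ D) (hT : 0 < T) (hG : 0 ≤ G)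
    (h : σ / (K * N ^ q) * G ^ q ≤ D / T) :
    G ≤ N * (K * D / σ) ^ (1 / q) * (1 / T) ^ (1 / q) := by
  have hpow : (N * (K * D / σ) ^ (1 / q) * (1 / T) ^ (1 / q)) ^ q = N ^ q * (K * D / σ) / T := by
    rw [Real.mul_rpow (by positivity) (by positivity), Real.mul_rpow (by positivity)
      (by positivity), ← Real.rpow_mul (by positivity), ← Real.rpow_mul (by positivity),
      one_div_mul_cancel hq.ne', Real.rpow_one, Real.rpow_one]
    ring
  rw [← Real.rpow_le_rpow_iff hG (by positivity) hq, hpow]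
  rw [div_mul_eq_mul_div, div_le_div_iff₀ (by positivity) hT] at h
  rw [le_div_iff₀ hT, mul_div_assoc', le_div_iff₀ hσ]
  linear_combination h

section Step

variable {E : Type*} [NormedAddCommGroup E] [InnerProductSpace ℝ E] [CompleteSpace E]
  {g d : E → ℝ} {M : ℝ} {yk w : E}

@[simp] lemma breg_self (d : E → ℝ) (u : E) : breg d u u = 0 := by simp [breg]

lemma breg_nonneg {q σq : ℝ} (hq : 0 ≤ q) (hσq : 0 ≤ σq)
    (hH2 : ∀ x y : E, σq / q * ‖x - y‖ ^ q ≤ breg d y x) (u v : E) : 0 ≤ breg d u v :=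
  (by positivity : (0 : ℝ) ≤ σq / q * ‖v - u‖ ^ q).trans (hH2 v u)

lemma stepOK.apply_le (h : stepOK g d M yk w) : g w ≤ g yk := by
  have := h.1 yk
  simp only [sub_self, inner_zero_right, breg_self, mul_zero, add_zero] at this
  linarith [h.2]

lemma stepOK.gradient_eq (h : stepOK g d M yk w) (hd : DifferentiableAt ℝ d w) :
    gradient g yk = M • (gradient d yk - gradient d w) := by
  set v := gradient g yk + M • (gradient d w - gradient d yk)
  have hderiv : HasFDerivAt (fun z => ⟪gradient g yk, z - yk⟫_ℝ + M * breg d yk z)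
      (innerSL ℝ v) w := by
    have hlin : ∀ a : E, HasFDerivAt (fun z => ⟪a, z - yk⟫_ℝ) (innerSL ℝ a) w := fun a =>
      (innerSL ℝ a).hasFDerivAt.comp w ((hasFDerivAt_id w).sub_const yk) |>.congr_fderiv
        (by ext; simp)
    refine ((hlin _).add (((hd.hasFDerivAt.sub_const (d yk)).sub
      (hlin (gradient d yk))).const_mul M)).congr_fderiv ?_
    ext u
    simp [v, ← inner_gradient_left]
  have hv : innerSL ℝ v = 0 := IsLocalMin.hasFDerivAt_eq_zero (Eventually.of_forall h.1) hderiv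
  have : v = 0 := by simpa using congrArg norm hv
  rw [← sub_eq_zero, ← this]
  module

lemma stepOK.mul_breg_le (h : stepOK g d M yk w) (hd : DifferentiableAt ℝ d w) :
    M * breg d w yk ≤ g yk - g w := by
  have hacc := h.2
  rw [h.gradient_eq hd] at hacc
  have three_point : ⟪M • (gradient d yk - gradient d w), w - yk⟫_ℝ + M * breg d yk w
      = -(M * breg d w yk) := by
    simp only [breg, real_inner_smul_left, inner_sub_left, inner_sub_right]
    ring
  linarith

lemma stepOK.mul_rpow_le {q σq : ℝ} (h : stepOK g d M yk w) (hd : DifferentiableAt ℝ d w)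
    (hM : 0 ≤ M) (hH2 : ∀ x y : E, σq / q * ‖x - y‖ ^ q ≤ breg d y x) :
    M * (σq / q * ‖yk - w‖ ^ q) ≤ g yk - g w :=
  (mul_le_mul_of_nonneg_left (hH2 yk w) hM).trans (h.mul_breg_le hd)

lemma norm_gradient_sub_le_of_norm_iteratedFDeriv_le {s : Set E} {N : ℝ}
    (hd : ContDiff ℝ 2 d) (hs : Convex ℝ s) (hN : ∀ z ∈ s, ‖iteratedFDeriv ℝ 2 d z‖ ≤ N)
    {u v : E} (hu : u ∈ s) (hv : v ∈ s) :
    ‖gradient d u - gradient d v‖ ≤ N * ‖u - v‖ := by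
  have hdiff : Differentiable ℝ (fderiv ℝ d) :=
    (hd.fderiv_right (m := 1) (by norm_num)).differentiable one_ne_zero
  have hbound : ∀ z ∈ s, ‖fderiv ℝ (fderiv ℝ d) z‖ ≤ N := fun z hz => by
    simpa only [← norm_iteratedFDeriv_one, norm_iteratedFDeriv_fderiv] using hN z hz
  have hmv := hs.norm_image_sub_le_of_norm_fderiv_le (fun z _ => hdiff z) hbound hv hu
  rwa [gradient, gradient, ← map_sub, LinearIsometryEquiv.norm_map]

lemma stepOK.norm_gradient_le {s : Set E} {N : ℝ} (h : stepOK g d M yk w)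
    (hd : ContDiff ℝ 2 d) (hs : Convex ℝ s) (hN : ∀ z ∈ s, ‖iteratedFDeriv ℝ 2 d z‖ ≤ N)
    (hyk : yk ∈ s) (hw : w ∈ s) (hM : 0 ≤ M) :
    ‖gradient g yk‖ ≤ M * N * ‖yk - w‖ := by
  rw [h.gradient_eq (hd.differentiable (by norm_num) w), norm_smul, Real.norm_of_nonneg hM,
    mul_assoc]
  exact mul_le_mul_of_nonneg_left
    (norm_gradient_sub_le_of_norm_iteratedFDeriv_le hd hs hN hyk hw) hM

end Step

section Existence

variable {E : Type*} [NormedAddCommGroup E] [InnerProductSpace ℝ E] [FiniteDimensional ℝ E]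
  {g d : E → ℝ} {M : ℝ}

lemma tendsto_inner_add_mul_breg_cocompact {q σq : ℝ} (hM : 0 < M) (hσq : 0 < σq) (hq : 1 < q)
    (hH2 : ∀ x y : E, σq / q * ‖x - y‖ ^ q ≤ breg d y x) (a yk : E) :
    Tendsto (fun z => ⟪a, z - yk⟫_ℝ + M * breg d yk z) (cocompact E) atTop := by
  refine tendsto_atTop_mono (fun z => ?_) <|
    (tendsto_mul_rpow_sub_mul_atTop (c := M * (σq / q)) (by positivity) hq ‖a‖).comp
      (tendsto_dist_right_cocompact_atTop yk)
  have hinner := neg_le_of_abs_le (abs_real_inner_le_norm a (z - yk))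
  have hbreg := mul_le_mul_of_nonneg_left (hH2 z yk) hM.le
  simp only [Function.comp_apply, dist_eq_norm]
  linarith

lemma exists_stepOK {L q σq : ℝ} (hd : Continuous d) (hL : 0 < L) (hLM : L ≤ M)
    (hσq : 0 < σq) (hq : 1 < q)
    (hH1 : ∀ x y : E, g x ≤ g y + ⟪gradient g y, x - y⟫_ℝ + L * breg d y x)
    (hH2 : ∀ x y : E, σq / q * ‖x - y‖ ^ q ≤ breg d y x) (yk : E) :
    ∃ w, stepOK g d M yk w := by
  have hcont : Continuous fun z => ⟪gradient g yk, z - yk⟫_ℝ + M * breg d yk z := by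
    unfold breg; fun_prop
  obtain ⟨w, hw⟩ := hcont.exists_forall_le
    (tendsto_inner_add_mul_breg_cocompact (hL.trans_le hLM) hσq hq hH2 _ yk)
  refine ⟨w, hw, (hH1 w yk).trans ?_⟩
  gcongr
  exact breg_nonneg (by linarith) hσq.le hH2 yk w

end Existence

namespace algA

variable {E : Type*} [NormedAddCommGroup E] [InnerProductSpace ℝ E] [CompleteSpace E]
  {g d : E → ℝ} {L0 L : ℝ} {y : ℕ → E} {Lk : ℕ → ℝ} {ik : ℕ → ℕ}

lemma pos (h : algA g d L0 y Lk ik) (hL0 : 0 < L0) (k : ℕ) : 0 < Lk k := by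
  induction k with
  | zero => rwa [h.1]
  | succ k ih => rw [(h.2 k).2.2]; positivity

lemma antitone (h : algA g d L0 y Lk ik) : Antitone fun k => g (y k) :=
  antitone_nat_of_succ_le fun k => (h.2 k).1.apply_le

lemma coeff_le_max (h : algA g d L0 y Lk ik)
    (hex : ∀ M, L ≤ M → ∀ x, ∃ w, stepOK g d M x w) (k : ℕ) :
    (2 : ℝ) ^ ik k * Lk k ≤ max (Lk k) (2 * L) := by
  cases hik : ik k with
  | zero => simp
  | succ j =>
    have hfail : (2 : ℝ) ^ j * Lk k < L := by
      by_contra! hge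
      exact (h.2 k).2.1 j (by omega) (hex _ hge (y k))
    calc (2 : ℝ) ^ (j + 1) * Lk k = 2 * (2 ^ j * Lk k) := by ring
      _ ≤ 2 * L := by linarith
      _ ≤ max (Lk k) (2 * L) := le_max_right _ _

lemma le_max (h : algA g d L0 y Lk ik) (hL : 0 ≤ L)
    (hex : ∀ M, L ≤ M → ∀ x, ∃ w, stepOK g d M x w) (k : ℕ) :
    Lk k ≤ max L0 (2 * L) := by
  induction k with
  | zero => exact h.1.le.trans (le_max_left _ _)
  | succ k ih =>
    rw [(h.2 k).2.2]
    have := h.coeff_le_max hex k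
    have : max (Lk k) (2 * L) ≤ max L0 (2 * L) := max_le ih (le_max_right _ _)
    have : 0 ≤ max L0 (2 * L) := (by positivity : (0 : ℝ) ≤ 2 * L).trans (le_max_right _ _)
    linarith

lemma coeff_le (h : algA g d L0 y Lk ik) (hL : 0 ≤ L)
    (hex : ∀ M, L ≤ M → ∀ x, ∃ w, stepOK g d M x w) (k : ℕ) :
    (2 : ℝ) ^ ik k * Lk k ≤ max L0 (2 * L) :=
  (h.coeff_le_max hex k).trans (max_le (h.le_max hL hex k) (le_max_right _ _))

end algA

theorem statement_13_general
    {E : Type*} [NormedAddCommGroup E] [InnerProductSpace ℝ E] [FiniteDimensional ℝ E]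
    (d : E → ℝ)
    (g : E → ℝ)
    (L : ℝ) (hL : 0 < L)
    (hH1 : ∀ x y : E, g x ≤ g y + ⟪gradient g y, x - y⟫_ℝ + L * breg d y x)
    (q σq : ℝ) (hq : 2 ≤ q) (hσq : 0 < σq)
    (hd2 : ContDiff ℝ 2 d)
    (hH2 : ∀ x y : E, σq / q * ‖x - y‖ ^ q ≤ breg d y x)
    (L0 : ℝ) (hL0 : 0 < L0)
    (y : ℕ → E) (Lk : ℕ → ℝ) (ik : ℕ → ℕ)
    (halg : algA g d L0 y Lk ik)
    (N : ℝ)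
    (hH3 : ∀ z ∈ convexHull ℝ {w : E | g w ≤ g (y 0)}, ‖iteratedFDeriv ℝ 2 d z‖ ≤ N)
    (ystar : E) (hmin : ∀ z : E, g ystar ≤ g z) :
    (∀ k : ℕ,
      σq / (q * max (2 * L0) (4 * L) ^ (q - 1) * N ^ q) * ‖gradient g (y k)‖ ^ q
        ≤ g (y k) - g (y (k + 1))) ∧
    ∀ T : ℕ, 1 ≤ T → ∃ k < T,
      ‖gradient g (y k)‖ ≤
        N * (q * max (2 * L0) (4 * L) ^ (q - 1) * (g (y 0) - g ystar) / σq) ^ (1 / q)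
          * ((1 : ℝ) / T) ^ (1 / q) := by
  have hq1 : 1 < q := by linarith
  set M : ℕ → ℝ := fun k => 2 ^ ik k * Lk k
  have hex : ∀ M', L ≤ M' → ∀ x, ∃ w, stepOK g d M' x w := fun M' hM' x =>
    exists_stepOK hd2.continuous hL hM' hσq hq1 hH1 hH2 x
  have hMpos : ∀ k, 0 < M k := fun k => by have := halg.pos hL0 k; positivity
  have hMle : ∀ k, M k ≤ max (2 * L0) (4 * L) := fun k =>
    (halg.coeff_le hL.le hex k).trans (max_le_max (by linarith) (by linarith))
  have hmem : ∀ k, y k ∈ convexHull ℝ {w : E | g w ≤ g (y 0)} := fun k =>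
    subset_convexHull ℝ _ (halg.antitone (Nat.zero_le k))
  have hgrad : ∀ k, ‖gradient g (y k)‖ ≤ M k * N * ‖y k - y (k + 1)‖ := fun k =>
    (halg.2 k).1.norm_gradient_le hd2 (convex_convexHull ℝ _) hH3 (hmem k) (hmem (k + 1))
      (hMpos k).le
  have hdesc : ∀ k, σq / (q * max (2 * L0) (4 * L) ^ (q - 1) * N ^ q) * ‖gradient g (y k)‖ ^ q
      ≤ g (y k) - g (y (k + 1)) := fun k =>
    div_mul_rpow_le_of_le_mul hσq.le hq1.le (hMpos k) (hMle k) (norm_nonneg _) (norm_nonneg _)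
      (hgrad k) ((halg.2 k).1.mul_rpow_le (hd2.differentiable (by norm_num) _) (hMpos k).le hH2)
  refine ⟨hdesc, fun T hT => ?_⟩
  obtain rfl | hN := ((norm_nonneg _).trans (hH3 _ (hmem 0))).eq_or_lt
  -- for `N = 0` the rate constant is the junk value `σq / 0 = 0`, but then `∇g(y₀) = 0`
  · exact ⟨0, hT, by simpa using hgrad 0⟩
  obtain ⟨k, hk, hbound⟩ := exists_lt_le_div_of_le_sub_succ hdesc (fun k => hmin (y k)) hT
  exact ⟨k, hk, le_of_div_mul_rpow_le_div hσq (by positivity) hN (by linarith)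
    (sub_nonneg.mpr (hmin _)) (by positivity) (norm_nonneg _) hbound⟩

/-- Theorem A.2. Under (H1)–(H3), Algorithm A satisfies the per-iteration
decrease `g(y_k) − g(y_{k+1}) ≥ [σ_q/(q·max{2L₀,4L}^{q−1}·N^q)]·‖∇g(y_k)‖^q`, and after `T`
iterations `min_{0≤k≤T−1} ‖∇g(y_k)‖ ≤ N·[q·max{2L₀,4L}^{q−1}(g(y₀)−g(y*))/σ_q]^{1/q}·(1/T)^{1/q}`. -/
theorem statement_13
    {E : Type*} [NormedAddCommGroup E] [InnerProductSpace ℝ E] [FiniteDimensional ℝ E]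
    (d : E → ℝ) (hd : ConvexOn ℝ Set.univ d)
    (g : E → ℝ) (hg : Differentiable ℝ g)
    (L : ℝ) (hL : 0 < L)
    (hH1 : ∀ x y : E, g x ≤ g y + ⟪gradient g y, x - y⟫_ℝ + L * breg d y x)
    (q σq : ℝ) (hq : 2 ≤ q) (hσq : 0 < σq)
    (hd2 : ContDiff ℝ 2 d)
    (hH2 : ∀ x y : E, σq / q * ‖x - y‖ ^ q ≤ breg d y x)
    (L0 : ℝ) (hL0 : 0 < L0)
    (y : ℕ → E) (Lk : ℕ → ℝ) (ik : ℕ → ℕ)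
    (halg : algA g d L0 y Lk ik)
    (N : ℝ)
    (hH3 : ∀ z ∈ convexHull ℝ {w : E | g w ≤ g (y 0)}, ‖iteratedFDeriv ℝ 2 d z‖ ≤ N)
    (ystar : E) (hmin : ∀ z : E, g ystar ≤ g z) :
    (∀ k : ℕ,
      σq / (q * max (2 * L0) (4 * L) ^ (q - 1) * N ^ q) * ‖gradient g (y k)‖ ^ q
        ≤ g (y k) - g (y (k + 1))) ∧
    ∀ T : ℕ, 1 ≤ T → ∃ k < T,
      ‖gradient g (y k)‖ ≤
        N * (q * max (2 * L0) (4 * L) ^ (q - 1) * (g (y 0) - g ystar) / σq) ^ (1 / q)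
          * ((1 : ℝ) / T) ^ (1 / q) :=
  statement_13_general d g L hL hH1 q σq hq hσq hd2 hH2 L0 hL0 y Lk ik halg N hH3 ystar hmin
end

section
/- Suppose (H1)–(H4) hold (with (H3) taken on the sublevel set of g̃ = g + φ), g is twice continuously differentiable, and let {y_k} be generated by Algorithm B. Then for all k ≥ 0, the vector u(y_{k+1}) := ∇g(y_{k+1}) − ∇g(y_k) + 2L·[∇d(y_k) − ∇d(y_{k+1})] is a subgradient of g̃ at y_{k+1}, i.e., g̃(z) ≥ g̃(y_{k+1}) + ⟨u(y_{k+1}), z − y_{k+1}⟩ for all z ∈ E, and g̃(y_k) − g̃(y_{k+1}) ≥ [σ_q/(q·L^{q−1}·(3N)^q)]·‖u(y_{k+1})‖^q. -/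
open scoped InnerProductSpace

/-!
Optimality of `y_{k+1}` in the prox subproblem makes
`-(∇g(y_k) + 2L(∇d(y_{k+1}) - ∇d(y_k)))` a subgradient of `φ` at `y_{k+1}`; adding the gradient
of the convex function `g` gives the subgradient `u` of `g̃`. Comparing with `z = y_k` and using
relative smoothness gives the sufficient decrease `g̃(y_{k+1}) + L β_d(y_k, y_{k+1}) ≤ g̃(y_k)`,
so all iterates stay in the sublevel set of `y₀`. On its convex hull `‖∇²d‖ ≤ N`, and
`0 ≤ ∇²g ≤ L ∇²d` (the Hessian form of convexity and relative smoothness) gives `‖∇²g‖ ≤ LN`.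
Both gradients are therefore Lipschitz on `[y_k, y_{k+1}]`, so `‖u‖ ≤ 3LN ‖y_{k+1} - y_k‖`, and
uniform convexity `β_d ≥ (σ_q/q) ‖·‖^q` turns the decrease into the stated bound.
-/

section NormedSpace

variable {F : Type*} [NormedAddCommGroup F] [NormedSpace ℝ F]

theorem ContinuousLinearMap.opNorm_le_of_symm_of_nonneg_of_le (B : F →L[ℝ] F →L[ℝ] ℝ) {M : ℝ}
    (hM : 0 ≤ M) (hsymm : ∀ v w, B v w = B w v) (hnonneg : ∀ v, 0 ≤ B v v)
    (hle : ∀ v, B v v ≤ M * ‖v‖ ^ 2) : ‖B‖ ≤ M := by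
  refine B.opNorm_le_bound₂ hM fun v w => ?_
  have hCS : B v w ^ 2 ≤ B v v * B w w := by
    have := discrim_le_zero (a := B w w) (b := 2 * B v w) (c := B v v) fun t => by
      have := hnonneg (v + t • w)
      simp only [map_add, map_smul, add_apply, smul_apply, smul_eq_mul, hsymm w v] at this
      linarith
    rw [discrim] at this
    linarith
  refine abs_le_of_sq_le_sq ?_ (by positivity)
  calc B v w ^ 2 ≤ B v v * B w w := hCS
    _ ≤ (M * ‖v‖ ^ 2) * (M * ‖w‖ ^ 2) := mul_le_mul (hle v) (hle w) (hnonneg w) (by positivity)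
    _ = (M * ‖v‖ * ‖w‖) ^ 2 := by ring

theorem ContDiff.differentiable_fderiv {f : F → ℝ} (hf : ContDiff ℝ 2 f) :
    Differentiable ℝ (fderiv ℝ f) :=
  (hf.fderiv_right (m := 1) (by norm_num)).differentiable one_ne_zero

theorem norm_fderiv_fderiv_le_of_nonneg_of_le {f : F → ℝ} (hf : ContDiff ℝ 2 f) {x : F} {M : ℝ}
    (hM : 0 ≤ M) (hnonneg : ∀ v, 0 ≤ fderiv ℝ (fderiv ℝ f) x v v)
    (hle : ∀ v, fderiv ℝ (fderiv ℝ f) x v v ≤ M * ‖v‖ ^ 2) :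
    ‖fderiv ℝ (fderiv ℝ f) x‖ ≤ M :=
  (fderiv ℝ (fderiv ℝ f) x).opNorm_le_of_symm_of_nonneg_of_le hM
    (hf.contDiffAt.isSymmSndFDerivAt (by simp)) hnonneg hle

theorem hasDerivAt_fderiv_apply_add_smul {f : F → ℝ} {x : F}
    (hf : DifferentiableAt ℝ (fderiv ℝ f) x) (v : F) :
    HasDerivAt (fun t : ℝ => fderiv ℝ f (x + t • v) v) (fderiv ℝ (fderiv ℝ f) x v v) 0 := by
  simpa using (hf.hasFDerivAt.hasLineDerivAt v).clm_apply (hasDerivAt_const (0 : ℝ) v)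

end NormedSpace

section InnerProductSpace

variable {E : Type*} [NormedAddCommGroup E] [InnerProductSpace ℝ E]

def IsSubgradient (ψ : E → EReal) (x u : E) : Prop :=
  ∀ z, ψ x + ((⟪u, z - x⟫_ℝ : ℝ) : EReal) ≤ ψ z

theorem IsSubgradient.add {ψ₁ ψ₂ : E → EReal} {x u₁ u₂ : E} (h₁ : IsSubgradient ψ₁ x u₁)
    (h₂ : IsSubgradient ψ₂ x u₂) : IsSubgradient (ψ₁ + ψ₂) x (u₁ + u₂) := fun z => by
  rw [Pi.add_apply, Pi.add_apply, inner_add_left, EReal.coe_add, add_add_add_comm]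
  exact add_le_add (h₁ z) (h₂ z)

variable [CompleteSpace E]

@[simp]
theorem breg_self_s18 (f : E → ℝ) (a : E) : breg f a a = 0 := by
  simp [breg]

theorem breg_add_breg_swap (f : E → ℝ) (a b : E) :
    breg f a b + breg f b a = ⟪gradient f b - gradient f a, b - a⟫_ℝ := by
  simp only [breg, inner_sub_left, ← neg_sub a b, inner_neg_right]
  ring

theorem mul_fderiv_fderiv_le_of_mul_breg_le {f h : E → ℝ} (hf : ContDiff ℝ 2 f)
    (hh : ContDiff ℝ 2 h) {α β : ℝ} (hfh : ∀ x z, α * breg f z x ≤ β * breg h z x) (x v : E) :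
    α * fderiv ℝ (fderiv ℝ f) x v v ≤ β * fderiv ℝ (fderiv ℝ h) x v v := by
  -- Symmetrizing `hfh` shows that `G` is monotone; its derivative at `0` is the difference sought.
  set G : ℝ → ℝ := fun t => β * fderiv ℝ h (x + t • v) v - α * fderiv ℝ f (x + t • v) v
  have hG : HasDerivAt G (β * fderiv ℝ (fderiv ℝ h) x v v - α * fderiv ℝ (fderiv ℝ f) x v v) 0 :=
    ((hasDerivAt_fderiv_apply_add_smul (hh.differentiable_fderiv x) v).const_mul β).sub
      ((hasDerivAt_fderiv_apply_add_smul (hf.differentiable_fderiv x) v).const_mul α)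
  have hmono : Monotone G := by
    intro s t hst
    have key := add_le_add (hfh (x + t • v) (x + s • v)) (hfh (x + s • v) (x + t • v))
    rw [← mul_add, ← mul_add, breg_add_breg_swap, breg_add_breg_swap,
      add_sub_add_left_eq_sub, ← sub_smul] at key
    simp only [inner_smul_right, inner_sub_left, inner_gradient_left] at key
    have : 0 ≤ (t - s) * (G t - G s) := by simp only [G]; nlinarith
    rcases hst.eq_or_lt with rfl | hlt
    · exact le_rfl
    · exact sub_nonneg.1 (nonneg_of_mul_nonneg_right this (sub_pos.2 hlt))
  linarith [hG.deriv ▸ hmono.deriv_nonneg (x := 0)]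

theorem norm_gradient_sub_le_of_norm_fderiv_fderiv_le {f : E → ℝ} (hf : ContDiff ℝ 2 f)
    {s : Set E} (hs : Convex ℝ s) {M : ℝ} (hM : ∀ z ∈ s, ‖fderiv ℝ (fderiv ℝ f) z‖ ≤ M)
    {a b : E} (ha : a ∈ s) (hb : b ∈ s) :
    ‖gradient f b - gradient f a‖ ≤ M * ‖b - a‖ := by
  have := hs.norm_image_sub_le_of_norm_fderiv_le (fun z _ => hf.differentiable_fderiv z) hM ha hb
  rwa [gradient, gradient, ← map_sub, LinearIsometryEquiv.norm_map]

theorem hasGradientAt_inner_sub_add_mul_breg {d : E → ℝ} {b : E} (hd : DifferentiableAt ℝ d b)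
    (c a : E) (r : ℝ) :
    HasGradientAt (fun w => ⟪c, w - a⟫_ℝ + r * breg d a w)
      (c + r • (gradient d b - gradient d a)) b := by
  rw [hasGradientAt_iff_hasFDerivAt]
  have hlin : ∀ c : E, HasFDerivAt (fun w => ⟪c, w - a⟫_ℝ) (InnerProductSpace.toDual ℝ E c) b :=
    fun c => by
      simpa [inner_sub_right] using
        (InnerProductSpace.toDual ℝ E c).hasFDerivAt.sub_const (InnerProductSpace.toDual ℝ E c a)
  refine HasFDerivAt.congr_fderiv ((hlin c).fun_add ((((hd.hasGradientAt.hasFDerivAt).sub_const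
    (d a)).fun_sub (hlin (gradient d a))).const_mul r)) ?_
  simp only [map_add, map_smul, map_sub]

theorem isSubgradient_gradient_of_breg_nonneg {g : E → ℝ} {x : E} (hg : ∀ z, 0 ≤ breg g x z) :
    IsSubgradient (fun z => (g z : EReal)) x (gradient g x) := fun z => by
  have := hg z
  rw [breg] at this
  dsimp only
  exact_mod_cast (by linarith : g x + ⟪gradient g x, z - x⟫_ℝ ≤ g z)

theorem isSubgradient_neg_of_forall_add_le {F : E → ℝ} {ψ : E → EReal} {x G : E}
    (hF : HasGradientAt F G x) (hψx : ψ x ≠ ⊤) (hψbot : ∀ z, ψ z ≠ ⊥)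
    (hψconv : ∀ u v : E, ∀ a b : ℝ, 0 < a → 0 < b → a + b = 1 →
      ψ (a • u + b • v) ≤ (a : EReal) * ψ u + (b : EReal) * ψ v)
    (hmin : ∀ z, (F x : EReal) + ψ x ≤ F z + ψ z) : IsSubgradient ψ x (-G) := by
  intro z
  obtain ⟨p, hp⟩ : ∃ p : ℝ, ψ x = p := ⟨_, (EReal.coe_toReal hψx (hψbot x)).symm⟩
  by_cases hz : ψ z = ⊤
  · simp [hz]
  obtain ⟨s, hs⟩ : ∃ s : ℝ, ψ z = s := ⟨_, (EReal.coe_toReal hz (hψbot z)).symm⟩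
  have hslope : ∀ t ∈ Set.Ioo (0 : ℝ) 1, p - s ≤ t⁻¹ • (F (x + t • (z - x)) - F x) := by
    rintro t ⟨ht0, ht1⟩
    have hconv := hψconv x z (1 - t) t (by linarith) ht0 (by ring)
    rw [hp, hs, ← EReal.coe_mul, ← EReal.coe_mul, ← EReal.coe_add,
      show (1 - t) • x + t • z = x + t • (z - x) by module] at hconv
    have := (hp ▸ hmin (x + t • (z - x))).trans (add_le_add le_rfl hconv)
    have : F x + p ≤ F (x + t • (z - x)) + ((1 - t) * p + t * s) := by exact_mod_cast this
    rw [smul_eq_mul, le_inv_mul_iff₀ ht0]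
    linarith
  have hlim := (hF.hasFDerivAt.hasLineDerivAt (z - x)).tendsto_slope_zero_right
  have := ge_of_tendsto hlim (Filter.eventually_of_mem (Ioo_mem_nhdsGT one_pos) hslope)
  rw [InnerProductSpace.toDual_apply_apply] at this
  rw [hp, hs, inner_neg_left, ← EReal.coe_add, EReal.coe_le_coe_iff]
  linarith

theorem isSubgradient_add_of_prox_le {g d : E → ℝ} (hd : Differentiable ℝ d)
    (hconv : ∀ x z, 0 ≤ breg g x z) {φ : E → EReal}
    (hφbot : ∀ z, φ z ≠ ⊥)
    (hφconv : ∀ u v : E, ∀ a b : ℝ, 0 < a → 0 < b → a + b = 1 →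
      φ (a • u + b • v) ≤ (a : EReal) * φ u + (b : EReal) * φ v)
    {L : ℝ} {a b : E} (hb : φ b ≠ ⊤)
    (hmin : ∀ z, ((⟪gradient g a, b - a⟫_ℝ + 2 * L * breg d a b : ℝ) : EReal) + φ b
        ≤ ((⟪gradient g a, z - a⟫_ℝ + 2 * L * breg d a z : ℝ) : EReal) + φ z) :
    IsSubgradient ((fun z => (g z : EReal)) + φ) b
      (gradient g b - gradient g a + (2 * L) • (gradient d a - gradient d b)) := by
  have hprox := isSubgradient_neg_of_forall_add_le
    (hasGradientAt_inner_sub_add_mul_breg (hd b) (gradient g a) a (2 * L)) hb hφbot hφconv hmin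
  convert (isSubgradient_gradient_of_breg_nonneg (hconv b)).add hprox using 1
  module

theorem norm_fderiv_fderiv_le_mul_of_breg_le {g d : E → ℝ} (hg : ContDiff ℝ 2 g)
    (hd : ContDiff ℝ 2 d) {L N : ℝ} (hL : 0 ≤ L) (hconv : ∀ x z, 0 ≤ breg g x z)
    (hsmooth : ∀ x z, breg g x z ≤ L * breg d x z) {x : E}
    (hx : ‖fderiv ℝ (fderiv ℝ d) x‖ ≤ N) :
    ‖fderiv ℝ (fderiv ℝ g) x‖ ≤ L * N := by
  have hN : 0 ≤ N := (norm_nonneg (fderiv ℝ (fderiv ℝ d) x)).trans hx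
  refine norm_fderiv_fderiv_le_of_nonneg_of_le hg (mul_nonneg hL hN) (fun v => ?_) (fun v => ?_)
  · simpa using mul_fderiv_fderiv_le_of_mul_breg_le hg hg (α := 0) (β := 1)
      (by simpa using fun x z => hconv z x) x v
  · calc fderiv ℝ (fderiv ℝ g) x v v ≤ L * fderiv ℝ (fderiv ℝ d) x v v := by
          simpa using mul_fderiv_fderiv_le_of_mul_breg_le hg hd (α := 1) (β := L)
            (by simpa using fun x z => hsmooth z x) x v
      _ ≤ L * (N * ‖v‖ * ‖v‖) := by
          gcongr
          calc fderiv ℝ (fderiv ℝ d) x v v ≤ ‖fderiv ℝ (fderiv ℝ d) x v v‖ := le_abs_self _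
            _ ≤ ‖fderiv ℝ (fderiv ℝ d) x‖ * ‖v‖ * ‖v‖ := ContinuousLinearMap.le_opNorm₂ _ v v
            _ ≤ N * ‖v‖ * ‖v‖ := by gcongr
      _ = L * N * ‖v‖ ^ 2 := by ring

theorem norm_gradient_sub_add_smul_gradient_sub_le {g d : E → ℝ} (hg : ContDiff ℝ 2 g)
    (hd : ContDiff ℝ 2 d) {s : Set E} (hs : Convex ℝ s) {L N : ℝ} (hL : 0 ≤ L)
    (hgs : ∀ z ∈ s, ‖fderiv ℝ (fderiv ℝ g) z‖ ≤ L * N)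
    (hds : ∀ z ∈ s, ‖fderiv ℝ (fderiv ℝ d) z‖ ≤ N) {a b : E} (ha : a ∈ s) (hb : b ∈ s) :
    ‖gradient g b - gradient g a + (2 * L) • (gradient d a - gradient d b)‖
      ≤ L * (3 * N) * ‖b - a‖ := by
  have hg_lip := norm_gradient_sub_le_of_norm_fderiv_fderiv_le hg hs hgs ha hb
  have hd_lip := norm_gradient_sub_le_of_norm_fderiv_fderiv_le hd hs hds hb ha
  calc _ ≤ ‖gradient g b - gradient g a‖ + ‖(2 * L) • (gradient d a - gradient d b)‖ :=
        norm_add_le _ _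
    _ ≤ L * N * ‖b - a‖ + 2 * L * (N * ‖a - b‖) := by
        rw [norm_smul, Real.norm_of_nonneg (by positivity)]
        gcongr
    _ = L * (3 * N) * ‖b - a‖ := by rw [norm_sub_rev a b]; ring

theorem add_mul_breg_le_of_prox_le {g d : E → ℝ} {φ : E → EReal} {L : ℝ} {a b : E}
    (hsmooth : g b ≤ g a + ⟪gradient g a, b - a⟫_ℝ + L * breg d a b)
    (hmin : ((⟪gradient g a, b - a⟫_ℝ + 2 * L * breg d a b : ℝ) : EReal) + φ b
        ≤ ((⟪gradient g a, a - a⟫_ℝ + 2 * L * breg d a a : ℝ) : EReal) + φ a) :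
    (g b : EReal) + φ b + ((L * breg d a b : ℝ) : EReal) ≤ (g a : EReal) + φ a := by
  rw [sub_self, inner_zero_right, breg_self_s18, mul_zero, add_zero, EReal.coe_zero, zero_add] at hmin
  calc (g b : EReal) + φ b + ((L * breg d a b : ℝ) : EReal)
      = ((g b + L * breg d a b : ℝ) : EReal) + φ b := by rw [EReal.coe_add, add_right_comm]
    _ ≤ ((g a + (⟪gradient g a, b - a⟫_ℝ + 2 * L * breg d a b) : ℝ) : EReal) + φ b :=
        add_le_add (EReal.coe_le_coe_iff.2 (by linarith)) le_rfl
    _ ≤ (g a : EReal) + φ a := by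
        rw [EReal.coe_add, add_assoc]
        exact add_le_add le_rfl hmin

end InnerProductSpace

theorem div_mul_rpow_le_mul_mul_rpow {σ q L K r δ : ℝ} (hσ : 0 ≤ σ) (hq : 0 < q) (hL : 0 < L)
    (hK : 0 ≤ K) (hr : 0 ≤ r) (hδ : 0 ≤ δ) (hrδ : r ≤ L * K * δ) :
    σ / (q * L ^ (q - 1) * K ^ q) * r ^ q ≤ L * (σ / q * δ ^ q) := by
  rcases hK.eq_or_lt with rfl | hK
  · -- the coefficient is `σ / 0 = 0`
    rw [Real.zero_rpow hq.ne', mul_zero, div_zero, zero_mul]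
    positivity
  calc σ / (q * L ^ (q - 1) * K ^ q) * r ^ q
      ≤ σ / (q * L ^ (q - 1) * K ^ q) * (L ^ q * K ^ q * δ ^ q) := by
        rw [← Real.mul_rpow hL.le hK.le, ← Real.mul_rpow (by positivity) hδ]
        gcongr
    _ = L * (σ / q * δ ^ q) := by
        rw [Real.rpow_sub_one hL.ne']
        field_simp

theorem statement_18_general
    {E : Type*} [NormedAddCommGroup E] [InnerProductSpace ℝ E] [FiniteDimensional ℝ E]
    (d : E → ℝ)
    (g : E → ℝ) (hg : ContDiff ℝ 2 g)
    (L : ℝ) (hL : 0 < L)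
    (hH1 : ∀ x y : E, g x ≤ g y + ⟪gradient g y, x - y⟫_ℝ + L * breg d y x)
    (q σq : ℝ) (hq : 2 ≤ q) (hσq : 0 < σq)
    (hd2 : ContDiff ℝ 2 d)
    (hH2 : ∀ x y : E, σq / q * ‖x - y‖ ^ q ≤ breg d y x)
    (μ : ℝ) (hμ : 0 ≤ μ)
    (hH4 : ∀ x y : E, g y + ⟪gradient g y, x - y⟫_ℝ + μ * breg d y x ≤ g x)
    (φ : E → EReal)
    (hφbot : ∀ z : E, φ z ≠ ⊥)
    (hφconv : ∀ u v : E, ∀ a b : ℝ, 0 < a → 0 < b → a + b = 1 →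
      φ (a • u + b • v) ≤ (a : EReal) * φ u + (b : EReal) * φ v)
    (y : ℕ → E)
    (halg : ∀ k : ℕ, φ (y (k + 1)) ≠ ⊤ ∧ ∀ z : E,
      ((⟪gradient g (y k), y (k + 1) - y k⟫_ℝ
          + 2 * L * breg d (y k) (y (k + 1)) : ℝ) : EReal) + φ (y (k + 1))
        ≤ ((⟪gradient g (y k), z - y k⟫_ℝ + 2 * L * breg d (y k) z : ℝ) : EReal) + φ z)
    (N : ℝ)
    (hH3 : ∀ z ∈ convexHull ℝ
        {w : E | ((g w : ℝ) : EReal) + φ w ≤ ((g (y 0) : ℝ) : EReal) + φ (y 0)},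
      ‖iteratedFDeriv ℝ 2 d z‖ ≤ N) :
    ∀ k : ℕ,
      (∀ z : E,
        ((g (y (k + 1)) : ℝ) : EReal) + φ (y (k + 1))
            + ((⟪gradient g (y (k + 1)) - gradient g (y k)
                + (2 * L) • (gradient d (y k) - gradient d (y (k + 1))),
                z - y (k + 1)⟫_ℝ : ℝ) : EReal)
          ≤ ((g z : ℝ) : EReal) + φ z) ∧
      ((g (y (k + 1)) : ℝ) : EReal) + φ (y (k + 1))
          + ((σq / (q * L ^ (q - 1) * (3 * N) ^ q)
              * ‖gradient g (y (k + 1)) - gradient g (y k)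
                  + (2 * L) • (gradient d (y k) - gradient d (y (k + 1)))‖ ^ q : ℝ) : EReal)
        ≤ ((g (y k) : ℝ) : EReal) + φ (y k) := by
  have hq0 : 0 < q := by linarith
  have hbreg_d (x z : E) : 0 ≤ breg d x z :=
    (by positivity : 0 ≤ σq / q * ‖z - x‖ ^ q).trans (hH2 z x)
  have hbreg_g (x z : E) : 0 ≤ breg g x z := by
    have := hH4 z x
    have := mul_nonneg hμ (hbreg_d x z)
    rw [breg]
    linarith
  have hsmooth (x z : E) : breg g x z ≤ L * breg d x z := by
    have := hH1 z x
    rw [breg]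
    linarith
  have hdescent (k : ℕ) := add_mul_breg_le_of_prox_le (hH1 _ _) ((halg k).2 (y k))
  set S := {w : E | ((g w : ℝ) : EReal) + φ w ≤ ((g (y 0) : ℝ) : EReal) + φ (y 0)}
  have hyS (k : ℕ) : y k ∈ S :=
    antitone_nat_of_succ_le (f := fun k => ((g (y k) : ℝ) : EReal) + φ (y k))
      (fun k => (le_add_of_nonneg_right (EReal.coe_nonneg.2
        (mul_nonneg hL.le (hbreg_d _ _)))).trans (hdescent k)) (Nat.zero_le k)
  have hd_hull (z : E) (hz : z ∈ convexHull ℝ S) : ‖fderiv ℝ (fderiv ℝ d) z‖ ≤ N := by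
    rw [← norm_iteratedFDeriv_one, norm_iteratedFDeriv_fderiv]
    exact hH3 z hz
  have hg_hull (z : E) (hz : z ∈ convexHull ℝ S) : ‖fderiv ℝ (fderiv ℝ g) z‖ ≤ L * N :=
    norm_fderiv_fderiv_le_mul_of_breg_le hg hd2 hL.le hbreg_g hsmooth (hd_hull z hz)
  intro k
  have ha := subset_convexHull ℝ S (hyS k)
  have hb := subset_convexHull ℝ S (hyS (k + 1))
  refine ⟨isSubgradient_add_of_prox_le (hd2.differentiable two_ne_zero) hbreg_g hφbot hφconv
    (halg k).1 (halg k).2, ?_⟩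
  have hu := norm_gradient_sub_add_smul_gradient_sub_le hg hd2 (convex_convexHull ℝ S) hL.le
    hg_hull hd_hull ha hb
  have hN : 0 ≤ 3 * N := by
    linarith [(norm_nonneg (fderiv ℝ (fderiv ℝ d) (y k))).trans (hd_hull _ ha)]
  refine (add_le_add le_rfl (EReal.coe_le_coe_iff.2 ?_)).trans (hdescent k)
  exact (div_mul_rpow_le_mul_mul_rpow hσq.le hq0 hL hN (norm_nonneg _) (norm_nonneg _)
    hu).trans (mul_le_mul_of_nonneg_left (hH2 _ _) hL.le)

/-- Lemma A.8. Under (H1)–(H4) (with (H3) on the sublevel set of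
`g̃ = g + φ`) and `g` twice continuously differentiable, for every `k ≥ 0` the vector
`u(y_{k+1}) = ∇g(y_{k+1}) − ∇g(y_k) + 2L[∇d(y_k) − ∇d(y_{k+1})]` is a subgradient of `g̃` at
`y_{k+1}`, and `g̃(y_k) − g̃(y_{k+1}) ≥ [σ_q/(q·L^{q−1}·(3N)^q)]·‖u(y_{k+1})‖^q`. -/
theorem statement_18
    {E : Type*} [NormedAddCommGroup E] [InnerProductSpace ℝ E] [FiniteDimensional ℝ E]
    (d : E → ℝ) (hd : ConvexOn ℝ Set.univ d)
    (g : E → ℝ) (hg : ContDiff ℝ 2 g)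
    (L : ℝ) (hL : 0 < L)
    (hH1 : ∀ x y : E, g x ≤ g y + ⟪gradient g y, x - y⟫_ℝ + L * breg d y x)
    (q σq : ℝ) (hq : 2 ≤ q) (hσq : 0 < σq)
    (hd2 : ContDiff ℝ 2 d)
    (hH2 : ∀ x y : E, σq / q * ‖x - y‖ ^ q ≤ breg d y x)
    (μ : ℝ) (hμ : 0 ≤ μ)
    (hH4 : ∀ x y : E, g y + ⟪gradient g y, x - y⟫_ℝ + μ * breg d y x ≤ g x)
    (φ : E → EReal)
    (hφbot : ∀ z : E, φ z ≠ ⊥) (hφtop : ∃ z : E, φ z ≠ ⊤)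
    (hφclosed : LowerSemicontinuous φ)
    (hφconv : ∀ u v : E, ∀ a b : ℝ, 0 < a → 0 < b → a + b = 1 →
      φ (a • u + b • v) ≤ (a : EReal) * φ u + (b : EReal) * φ v)
    (y : ℕ → E) (hy0 : φ (y 0) ≠ ⊤)
    (halg : ∀ k : ℕ, φ (y (k + 1)) ≠ ⊤ ∧ ∀ z : E,
      ((⟪gradient g (y k), y (k + 1) - y k⟫_ℝ
          + 2 * L * breg d (y k) (y (k + 1)) : ℝ) : EReal) + φ (y (k + 1))
        ≤ ((⟪gradient g (y k), z - y k⟫_ℝ + 2 * L * breg d (y k) z : ℝ) : EReal) + φ z)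
    (N : ℝ)
    (hH3 : ∀ z ∈ convexHull ℝ
        {w : E | ((g w : ℝ) : EReal) + φ w ≤ ((g (y 0) : ℝ) : EReal) + φ (y 0)},
      ‖iteratedFDeriv ℝ 2 d z‖ ≤ N) :
    ∀ k : ℕ,
      (∀ z : E,
        ((g (y (k + 1)) : ℝ) : EReal) + φ (y (k + 1))
            + ((⟪gradient g (y (k + 1)) - gradient g (y k)
                + (2 * L) • (gradient d (y k) - gradient d (y (k + 1))),
                z - y (k + 1)⟫_ℝ : ℝ) : EReal)
          ≤ ((g z : ℝ) : EReal) + φ z) ∧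
      ((g (y (k + 1)) : ℝ) : EReal) + φ (y (k + 1))
          + ((σq / (q * L ^ (q - 1) * (3 * N) ^ q)
              * ‖gradient g (y (k + 1)) - gradient g (y k)
                  + (2 * L) • (gradient d (y k) - gradient d (y (k + 1)))‖ ^ q : ℝ) : EReal)
        ≤ ((g (y k) : ℝ) : EReal) + φ (y k) :=
  statement_18_general d g hg L hL hH1 q σq hq hσq hd2 hH2 μ hμ hH4 φ hφbot hφconv y halg N hH3
end

section
/- Suppose (H1) and (H4) hold with 0 ≤ μ < 2L, that g̃ = g + φ has a global minimizer y*, and let {y_k} be generated by Algorithm B. Then for all k ≥ 1, g̃(y_k) − g̃(y*) ≤ (2L − μ)·β_d(y₀, y*)/k; moreover, if μ > 0, then g̃(y_k) − g̃(y*) ≤ μ·β_d(y₀, y*)/[(1 + μ/(2L − μ))^k − 1]. -/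
/-!
A step of Algorithm B minimizes `m + ψ` with `m(x) = ⟪∇g(y), x - y⟫ + 2L·β_d(y, x)` and `ψ` convex,
so its first-order optimality condition, together with the three-point identity for Bregman
distances, gives `m(y⁺) + ψ(y⁺) + 2L·β_d(y⁺, z) ≤ m(z) + ψ(z)` for every `z` in the domain.
With `z = y_k` and relative smoothness this shows that `e_k = g̃(y_k) - g̃(y*)` is nonincreasing;
with `z = y*`, relative smoothness and relative strong convexity it gives the recursion
`e_{k+1} + 2L·β_d(y_{k+1}, y*) ≤ (2L - μ)·β_d(y_k, y*)`. Weighting its instance at `k = j` by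
`ρ^(j+1)`, where `ρ = 1 + μ/(2L - μ)` (or by `1`), makes the Bregman terms telescope, and
monotonicity of `e` turns the weighted sum into the two rates.
-/

open scoped InnerProductSpace

open Filter Topology Set Finset

section ConvexLineDeriv

variable {E : Type*} [AddCommGroup E] [Module ℝ E] {S : Set E} {f h : E → ℝ} {x z : E} {D : ℝ}

lemma ConvexOn.le_add_mul_sub (hf : ConvexOn ℝ S f) (hx : x ∈ S) (hz : z ∈ S) {t : ℝ}
    (ht₀ : 0 ≤ t) (ht₁ : t ≤ 1) : f (x + t • (z - x)) ≤ f x + t * (f z - f x) := by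
  have key := hf.2 hx hz (sub_nonneg.2 ht₁) ht₀ (sub_add_cancel 1 t)
  have hpt : (1 - t) • x + t • z = x + t • (z - x) := by
    rw [smul_sub, sub_smul, one_smul]; abel
  rw [hpt, smul_eq_mul, smul_eq_mul] at key
  linarith

lemma ConvexOn.le_sub_of_hasLineDerivAt (hf : ConvexOn ℝ S f) (hx : x ∈ S) (hz : z ∈ S)
    (hD : HasLineDerivAt ℝ f D x (z - x)) : D ≤ f z - f x := by
  refine le_of_tendsto hD.tendsto_slope_zero_right ?_
  filter_upwards [Ioc_mem_nhdsGT zero_lt_one] with t ht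
  rw [smul_eq_mul, inv_mul_le_iff₀ ht.1]
  linarith [hf.le_add_mul_sub hx hz ht.1.le ht.2]

lemma IsMinOn.sub_le_of_hasLineDerivAt (hmin : IsMinOn (fun y => h y + f y) S x)
    (hf : ConvexOn ℝ S f) (hx : x ∈ S) (hz : z ∈ S) (hD : HasLineDerivAt ℝ h D x (z - x)) :
    f x - f z ≤ D := by
  refine ge_of_tendsto hD.tendsto_slope_zero_right ?_
  filter_upwards [Ioc_mem_nhdsGT zero_lt_one] with t ht
  have hmin_t := isMinOn_iff.1 hmin _ (hf.1.add_smul_sub_mem hx hz ⟨ht.1.le, ht.2⟩)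
  rw [smul_eq_mul, le_inv_mul_iff₀ ht.1]
  linarith [hf.le_add_mul_sub hx hz ht.1.le ht.2]

end ConvexLineDeriv

section Bregman

variable {E : Type*} [NormedAddCommGroup E] [InnerProductSpace ℝ E] {x : E}

lemma hasLineDerivAt_inner_sub (a u v : E) :
    HasLineDerivAt ℝ (fun y => ⟪a, y - u⟫_ℝ) ⟪a, v⟫_ℝ x v := by
  have hline : (fun t : ℝ => ⟪a, x + t • v - u⟫_ℝ) = fun t => ⟪a, x - u⟫_ℝ + t * ⟪a, v⟫_ℝ := by
    funext t
    rw [add_sub_right_comm, inner_add_right, real_inner_smul_right]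
  show HasDerivAt _ _ _
  rw [hline]
  simpa using (hasDerivAt_mul_const ⟪a, v⟫_ℝ).const_add ⟪a, x - u⟫_ℝ (x := 0)

variable [CompleteSpace E]

lemma breg_three_point (d : E → ℝ) (u w z : E) :
    breg d u z = breg d u w + breg d w z + ⟪gradient d w - gradient d u, z - w⟫_ℝ := by
  have hsplit : z - u = (z - w) + (w - u) := by abel
  simp only [breg, inner_sub_left, hsplit, inner_add_right]
  ring

variable {d : E → ℝ}

lemma DifferentiableAt.hasLineDerivAt_inner_gradient (hd : DifferentiableAt ℝ d x) (v : E) :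
    HasLineDerivAt ℝ d ⟪gradient d x, v⟫_ℝ x v := by
  simpa [inner_gradient_left] using hd.hasFDerivAt.hasLineDerivAt v

lemma hasLineDerivAt_breg (hd : DifferentiableAt ℝ d x) (u v : E) :
    HasLineDerivAt ℝ (breg d u) ⟪gradient d x - gradient d u, v⟫_ℝ x v := by
  rw [inner_sub_left]
  exact HasDerivAt.sub ((hd.hasLineDerivAt_inner_gradient v).sub_const (d u))
    (hasLineDerivAt_inner_sub (gradient d u) u v)

lemma breg_nonneg_s19 (hd : ConvexOn ℝ univ d) (hd' : Differentiable ℝ d) (u v : E) :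
    0 ≤ breg d u v := by
  have := hd.le_sub_of_hasLineDerivAt (mem_univ u) (mem_univ v)
    ((hd' u).hasLineDerivAt_inner_gradient (v - u))
  rw [breg]
  linarith

lemma IsMinOn.add_breg_le {ψ : E → ℝ} {S : Set E} {w u z : E} {c : ℝ}
    (hmin : IsMinOn (fun y => ⟪w, y - u⟫_ℝ + c * breg d u y + ψ y) S x)
    (hψ : ConvexOn ℝ S ψ) (hx : x ∈ S) (hz : z ∈ S) (hd : DifferentiableAt ℝ d x) :
    ⟪w, x - u⟫_ℝ + c * breg d u x + ψ x + c * breg d x z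
      ≤ ⟪w, z - u⟫_ℝ + c * breg d u z + ψ z := by
  have hD : HasLineDerivAt ℝ (fun y => ⟪w, y - u⟫_ℝ + c * breg d u y)
      (⟪w, z - x⟫_ℝ + c * ⟪gradient d x - gradient d u, z - x⟫_ℝ) x (z - x) :=
    HasDerivAt.add (hasLineDerivAt_inner_sub w u (z - x))
      (HasDerivAt.const_mul c (hasLineDerivAt_breg hd u (z - x)))
  have hopt := hmin.sub_le_of_hasLineDerivAt hψ hx hz hD
  have hsplit : ⟪w, z - u⟫_ℝ = ⟪w, z - x⟫_ℝ + ⟪w, x - u⟫_ℝ := by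
    rw [← inner_add_right, sub_add_sub_cancel]
  rw [breg_three_point d u x z, hsplit]
  linarith

end Bregman

section BregmanProxGrad

variable {E : Type*} [NormedAddCommGroup E] [InnerProductSpace ℝ E] [CompleteSpace E]
  {d g ψ : E → ℝ} {S : Set E} {L : ℝ} {y y' : E}

lemma objective_le_of_bregProxGrad_step (hd : ConvexOn ℝ univ d) (hd' : Differentiable ℝ d)
    (hψ : ConvexOn ℝ S ψ) (hL : 0 ≤ L)
    (hH1 : g y' ≤ g y + ⟪gradient g y, y' - y⟫_ℝ + L * breg d y y')
    (hmin : IsMinOn (fun x => ⟪gradient g y, x - y⟫_ℝ + 2 * L * breg d y x + ψ x) S y')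
    (hy : y ∈ S) (hy' : y' ∈ S) :
    g y' + ψ y' ≤ g y + ψ y := by
  have hprox := hmin.add_breg_le hψ hy' hy (hd' y')
  have hself : breg d y y = 0 := by simp [breg]
  rw [hself, sub_self, inner_zero_right] at hprox
  linarith [mul_nonneg hL (breg_nonneg_s19 hd hd' y y'), mul_nonneg hL (breg_nonneg_s19 hd hd' y' y)]

lemma objective_sub_le_of_bregProxGrad_step {μ : ℝ} {ystar : E}
    (hd : ConvexOn ℝ univ d) (hd' : Differentiable ℝ d) (hψ : ConvexOn ℝ S ψ) (hL : 0 ≤ L)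
    (hH1 : g y' ≤ g y + ⟪gradient g y, y' - y⟫_ℝ + L * breg d y y')
    (hH4 : g y + ⟪gradient g y, ystar - y⟫_ℝ + μ * breg d y ystar ≤ g ystar)
    (hmin : IsMinOn (fun x => ⟪gradient g y, x - y⟫_ℝ + 2 * L * breg d y x + ψ x) S y')
    (hy' : y' ∈ S) (hstar : ystar ∈ S) :
    g y' + ψ y' - (g ystar + ψ ystar) + 2 * L * breg d y' ystar
      ≤ (2 * L - μ) * breg d y ystar := by
  have hprox := hmin.add_breg_le hψ hy' hstar (hd' y')
  linarith [mul_nonneg hL (breg_nonneg_s19 hd hd' y y')]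

end BregmanProxGrad

section Rates

variable {e b : ℕ → ℝ} {α μ : ℝ}

/-- The potential `w (k + 1) * α * b k` telescopes along the recursion. -/
lemma Antitone.mul_sum_le_of_descent (he : Antitone e) (hb : ∀ k, 0 ≤ b k) (hα : 0 ≤ α)
    (hrec : ∀ k, e (k + 1) + (α + μ) * b (k + 1) ≤ α * b k)
    {w : ℕ → ℝ} (hw : ∀ j, 0 ≤ w j) (hw_step : ∀ j, w (j + 1) * α ≤ w j * (α + μ)) (k : ℕ) :
    e k * ∑ j ∈ range k, w (j + 1) ≤ w 1 * α * b 0 := by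
  have htel : ∀ n, ∑ j ∈ range n, w (j + 1) * e (j + 1) + w (n + 1) * α * b n
      ≤ w 1 * α * b 0 := by
    intro n
    induction n with
    | zero => simp
    | succ n ih =>
      rw [sum_range_succ]
      have hdesc := mul_le_mul_of_nonneg_left (hrec n) (hw (n + 1))
      have hweight := mul_le_mul_of_nonneg_right (hw_step (n + 1)) (hb (n + 1))
      linarith
  have hmono : e k * ∑ j ∈ range k, w (j + 1) ≤ ∑ j ∈ range k, w (j + 1) * e (j + 1) := by
    rw [mul_sum]
    refine sum_le_sum fun j hj => ?_
    rw [mul_comm]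
    exact mul_le_mul_of_nonneg_left (he (mem_range.1 hj)) (hw (j + 1))
  linarith [htel k, mul_nonneg (mul_nonneg (hw (k + 1)) hα) (hb k)]

lemma Antitone.le_div_of_descent (he : Antitone e) (hb : ∀ k, 0 ≤ b k) (hα : 0 ≤ α)
    (hμ : 0 ≤ μ) (hrec : ∀ k, e (k + 1) + (α + μ) * b (k + 1) ≤ α * b k)
    {k : ℕ} (hk : 1 ≤ k) : e k ≤ α * b 0 / k := by
  have hsum := he.mul_sum_le_of_descent hb hα hrec (w := fun _ => 1) (fun _ => zero_le_one)
    (fun _ => by linarith) k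
  simp only [sum_const, card_range, nsmul_eq_mul, mul_one, one_mul] at hsum
  rwa [le_div_iff₀ (by exact_mod_cast hk)]

lemma Antitone.le_div_geom_of_descent (he : Antitone e) (hb : ∀ k, 0 ≤ b k) (hα : 0 < α)
    (hμ : 0 < μ) (hrec : ∀ k, e (k + 1) + (α + μ) * b (k + 1) ≤ α * b k)
    {k : ℕ} (hk : 1 ≤ k) : e k ≤ μ * b 0 / ((1 + μ / α) ^ k - 1) := by
  set ρ := 1 + μ / α with hρ
  have hρα : ρ * α = α + μ := by rw [hρ]; field_simp
  have hρ1 : 1 < ρ := by rw [hρ]; linarith [div_pos hμ hα]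
  have hsum := he.mul_sum_le_of_descent hb hα.le hrec (w := fun j => ρ ^ j)
    (fun j => pow_nonneg (by linarith) j) (fun j => by rw [pow_succ, mul_assoc, hρα]) k
  have hgeom : ∑ j ∈ range k, ρ ^ (j + 1) = (α + μ) / μ * (ρ ^ k - 1) := by
    have hρsub : ρ - 1 = μ / α := by rw [hρ]; ring
    simp only [pow_succ]
    rw [← sum_mul, geom_sum_eq hρ1.ne', hρsub, ← hρα]
    field_simp
  have hpos : 0 < ρ ^ k - 1 := sub_pos.2 (one_lt_pow₀ hρ1 (by omega))
  rw [hgeom, pow_one, hρα] at hsum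
  rw [le_div_iff₀ hpos]
  refine le_of_mul_le_mul_left ?_ (by positivity : 0 < (α + μ) / μ)
  calc (α + μ) / μ * (e k * (ρ ^ k - 1)) = e k * ((α + μ) / μ * (ρ ^ k - 1)) := by ring
    _ ≤ (α + μ) * b 0 := hsum
    _ = (α + μ) / μ * (μ * b 0) := by field_simp

end Rates

lemma convexOn_toReal_of_ne_bot {E : Type*} [AddCommGroup E] [Module ℝ E] {φ : E → EReal}
    (hbot : ∀ x, φ x ≠ ⊥)
    (hconv : ∀ u v : E, ∀ a b : ℝ, 0 < a → 0 < b → a + b = 1 →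
      φ (a • u + b • v) ≤ (a : EReal) * φ u + (b : EReal) * φ v) :
    ConvexOn ℝ {x | φ x ≠ ⊤} (fun x => (φ x).toReal) := by
  have hcomb : ∀ ⦃u⦄, φ u ≠ ⊤ → ∀ ⦃v⦄, φ v ≠ ⊤ → ∀ ⦃a b : ℝ⦄, 0 < a → 0 < b → a + b = 1 →
      φ (a • u + b • v) ≤ ((a * (φ u).toReal + b * (φ v).toReal : ℝ) : EReal) := by
    intro u hu v hv a b ha hb hab
    rw [EReal.coe_add, EReal.coe_mul, EReal.coe_mul, EReal.coe_toReal hu (hbot u),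
      EReal.coe_toReal hv (hbot v)]
    exact hconv u v a b ha hb hab
  refine convexOn_iff_forall_pos.2 ⟨convex_iff_forall_pos.2 ?_, ?_⟩
  · intro u hu v hv a b ha hb hab
    exact ne_top_of_le_ne_top (EReal.coe_ne_top _) (hcomb hu hv ha hb hab)
  · intro u hu v hv a b ha hb hab
    have h := EReal.toReal_le_toReal (hcomb hu hv ha hb hab) (hbot _) (EReal.coe_ne_top _)
    rwa [EReal.toReal_coe] at h

lemma isMinOn_add_toReal {E : Type*} {φ : E → EReal} {m : E → ℝ} {x : E}
    (hbot : ∀ z, φ z ≠ ⊥) (hx : φ x ≠ ⊤) (hmin : ∀ z, (m x : EReal) + φ x ≤ (m z : EReal) + φ z) :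
    IsMinOn (fun z => m z + (φ z).toReal) {z | φ z ≠ ⊤} x := isMinOn_iff.2 fun z hz => by
  have h := hmin z
  rw [← EReal.coe_toReal hx (hbot x), ← EReal.coe_toReal hz (hbot z)] at h
  exact_mod_cast h

theorem statement_19_general
    {E : Type*} [NormedAddCommGroup E] [InnerProductSpace ℝ E] [FiniteDimensional ℝ E]
    (d : E → ℝ) (hd : ConvexOn ℝ Set.univ d) (hd' : Differentiable ℝ d)
    (g : E → ℝ)
    (L : ℝ) (hL : 0 < L)
    (hH1 : ∀ x y : E, g x ≤ g y + ⟪gradient g y, x - y⟫_ℝ + L * breg d y x)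
    (μ : ℝ) (hμ0 : 0 ≤ μ) (hμL : μ < 2 * L)
    (hH4 : ∀ x y : E, g y + ⟪gradient g y, x - y⟫_ℝ + μ * breg d y x ≤ g x)
    (φ : E → EReal)
    (hφbot : ∀ z : E, φ z ≠ ⊥)
    (hφconv : ∀ u v : E, ∀ a b : ℝ, 0 < a → 0 < b → a + b = 1 →
      φ (a • u + b • v) ≤ (a : EReal) * φ u + (b : EReal) * φ v)
    (y : ℕ → E) (hy0 : φ (y 0) ≠ ⊤)
    (halg : ∀ k : ℕ, φ (y (k + 1)) ≠ ⊤ ∧ ∀ z : E,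
      ((⟪gradient g (y k), y (k + 1) - y k⟫_ℝ
          + 2 * L * breg d (y k) (y (k + 1)) : ℝ) : EReal) + φ (y (k + 1))
        ≤ ((⟪gradient g (y k), z - y k⟫_ℝ + 2 * L * breg d (y k) z : ℝ) : EReal) + φ z)
    (ystar : E)
    (hmin : ∀ z : E, ((g ystar : ℝ) : EReal) + φ ystar ≤ ((g z : ℝ) : EReal) + φ z) :
    ∀ k : ℕ, 1 ≤ k →
      (((g (y k) : ℝ) : EReal) + φ (y k)
        ≤ ((g ystar : ℝ) : EReal) + φ ystar
            + (((2 * L - μ) * breg d (y 0) ystar / k : ℝ) : EReal)) ∧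
      (0 < μ →
        ((g (y k) : ℝ) : EReal) + φ (y k)
          ≤ ((g ystar : ℝ) : EReal) + φ ystar
              + ((μ * breg d (y 0) ystar / ((1 + μ / (2 * L - μ)) ^ k - 1) : ℝ) : EReal)) := by
  set S := {x | φ x ≠ ⊤}
  set ψ := fun x => (φ x).toReal
  have hψ : ConvexOn ℝ S ψ := convexOn_toReal_of_ne_bot hφbot hφconv
  have hcoe : ∀ x ∈ S, φ x = (ψ x : EReal) := fun x hx => (EReal.coe_toReal hx (hφbot x)).symm
  have hyS : ∀ k, y k ∈ S
    | 0 => hy0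
    | k + 1 => (halg k).1
  have hstarS : ystar ∈ S := fun htop => by
    have h := hmin (y 0)
    rw [htop, EReal.coe_add_top, hcoe _ (hyS 0), top_le_iff] at h
    exact EReal.add_ne_top (EReal.coe_ne_top _) (EReal.coe_ne_top _) h
  have hstep : ∀ k, IsMinOn (fun x => ⟪gradient g (y k), x - y k⟫_ℝ
      + 2 * L * breg d (y k) x + ψ x) S (y (k + 1)) := fun k =>
    isMinOn_add_toReal hφbot (halg k).1 (halg k).2
  set e := fun k => g (y k) + ψ (y k) - (g ystar + ψ ystar)
  have he : Antitone e := antitone_nat_of_succ_le fun k => by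
    simpa [e] using objective_le_of_bregProxGrad_step hd hd' hψ hL.le (hH1 _ _) (hstep k)
      (hyS k) (hyS (k + 1))
  have hrec : ∀ k, e (k + 1) + (2 * L - μ + μ) * breg d (y (k + 1)) ystar
      ≤ (2 * L - μ) * breg d (y k) ystar := fun k => by
    simpa [e] using objective_sub_le_of_bregProxGrad_step hd hd' hψ hL.le (hH1 _ _)
      (hH4 ystar (y k)) (hstep k) (hyS (k + 1)) hstarS
  have hbound : ∀ k r, e k ≤ r →
      ((g (y k) : ℝ) : EReal) + φ (y k) ≤ ((g ystar : ℝ) : EReal) + φ ystar + (r : EReal) := by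
    intro k r hr
    rw [hcoe _ (hyS k), hcoe _ hstarS]
    exact_mod_cast sub_le_iff_le_add'.1 hr
  have hb := fun k => breg_nonneg_s19 hd hd' (y k) ystar
  intro k hk
  exact ⟨hbound k _ (he.le_div_of_descent hb (by linarith) hμ0 hrec hk),
    fun hμ => hbound k _ (he.le_div_geom_of_descent hb (by linarith) hμ hrec hk)⟩

/-- Theorem A.9. Under (H1) and (H4) with `0 ≤ μ < 2L`, if `g̃ = g + φ`
has a global minimizer `y*`, then Algorithm B satisfies, for all `k ≥ 1`,
`g̃(y_k) − g̃(y*) ≤ (2L − μ)·β_d(y₀, y*)/k`, and moreover, if `μ > 0`,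
`g̃(y_k) − g̃(y*) ≤ μ·β_d(y₀, y*)/[(1 + μ/(2L − μ))^k − 1]`. -/
theorem statement_19
    {E : Type*} [NormedAddCommGroup E] [InnerProductSpace ℝ E] [FiniteDimensional ℝ E]
    (d : E → ℝ) (hd : ConvexOn ℝ Set.univ d) (hd' : Differentiable ℝ d)
    (g : E → ℝ) (hg : Differentiable ℝ g)
    (L : ℝ) (hL : 0 < L)
    (hH1 : ∀ x y : E, g x ≤ g y + ⟪gradient g y, x - y⟫_ℝ + L * breg d y x)
    (μ : ℝ) (hμ0 : 0 ≤ μ) (hμL : μ < 2 * L)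
    (hH4 : ∀ x y : E, g y + ⟪gradient g y, x - y⟫_ℝ + μ * breg d y x ≤ g x)
    (φ : E → EReal)
    (hφbot : ∀ z : E, φ z ≠ ⊥) (hφtop : ∃ z : E, φ z ≠ ⊤)
    (hφclosed : LowerSemicontinuous φ)
    (hφconv : ∀ u v : E, ∀ a b : ℝ, 0 < a → 0 < b → a + b = 1 →
      φ (a • u + b • v) ≤ (a : EReal) * φ u + (b : EReal) * φ v)
    (y : ℕ → E) (hy0 : φ (y 0) ≠ ⊤)
    (halg : ∀ k : ℕ, φ (y (k + 1)) ≠ ⊤ ∧ ∀ z : E,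
      ((⟪gradient g (y k), y (k + 1) - y k⟫_ℝ
          + 2 * L * breg d (y k) (y (k + 1)) : ℝ) : EReal) + φ (y (k + 1))
        ≤ ((⟪gradient g (y k), z - y k⟫_ℝ + 2 * L * breg d (y k) z : ℝ) : EReal) + φ z)
    (ystar : E)
    (hmin : ∀ z : E, ((g ystar : ℝ) : EReal) + φ ystar ≤ ((g z : ℝ) : EReal) + φ z) :
    ∀ k : ℕ, 1 ≤ k →
      (((g (y k) : ℝ) : EReal) + φ (y k)
        ≤ ((g ystar : ℝ) : EReal) + φ ystar
            + (((2 * L - μ) * breg d (y 0) ystar / k : ℝ) : EReal)) ∧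
      (0 < μ →
        ((g (y k) : ℝ) : EReal) + φ (y k)
          ≤ ((g ystar : ℝ) : EReal) + φ ystar
              + ((μ * breg d (y 0) ystar / ((1 + μ / (2 * L - μ)) ^ k - 1) : ℝ) : EReal)) :=
  statement_19_general d hd hd' g L hL hH1 μ hμ0 hμL hH4 φ hφbot hφconv y hy0 halg ystar hmin
end
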